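/- arXiv:1510.09066 — 8 statements merged into one kernel-verified Lean document; each statement's English description precedes it below -/
import Mathlib

section
/- Let $\mathfrak g$ be a finite-dimensional Lie algebra with exponential map $\exp$ into a Lie group $G$. If $(B_n)_{n\geq 1}$ is a sequence in $\mathfrak g$ with $\lim_{n\to\infty} B_n = 0$ and $B \in \mathfrak g$, then $\exp(B_n)^{\lfloor tn \rfloor} \to \exp(tB)$ uniformly in $t \in [0,1]$ as $n \to \infty$ if and only if $\lim_{n\to\infty} n B_n = B$. -/
/-!
Since `exp (B k) ^ ⌊t k⌋ = exp (⌊t k⌋ • B k)` and `⌊t k⌋ • B k` differs from `t • (k • B k)` by at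
most `‖B k‖`, everything is about the exponents. If `k • B k → B₀`, the exponents converge
uniformly to `t • B₀`, which ranges over a compact set, and `exp` is uniformly continuous near it.

Conversely, `exp` has strict derivative `1` at `0`, so `‖x - y‖ ≤ 2 ‖exp x - exp y‖` on a small
ball. Fix `t₀ > 0` with `t₀ • B₀` deep inside that ball. The points `m • B k`,
`m = 0, 1, …, ⌊t₀ k⌋`, move in steps of size `‖B k‖ → 0`, and uniform convergence at `t = m / k`
keeps each of them close to `(m / k) • B₀`, so none can leave the ball. At `m = ⌊t₀ k⌋` this gives
`t₀ • (k • B k) → t₀ • B₀`.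
-/

open Filter Topology NormedSpace Set

theorem TendstoUniformlyOn.comp_of_isCompact {α β γ ι : Type*} [UniformSpace β]
    [UniformSpace γ] {F : ι → α → β} {f : α → β} {p : Filter ι} {s : Set α} {K : Set β}
    (hK : IsCompact K) (hfK : MapsTo f s K) {g : β → γ} (hg : ∀ b ∈ K, ContinuousAt g b)
    (h : TendstoUniformlyOn F f p s) :
    TendstoUniformlyOn (fun i x => g (F i x)) (fun x => g (f x)) p s := fun u hu => by
  filter_upwards [h _ (hK.uniformContinuousAt_of_continuousAt g hg hu)] with i hi x hx
  exact hi x hx (hfK hx)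

theorem norm_nsmul_sub_lt_of_forall_norm_apply_sub_lt {E F : Type*} [SeminormedAddCommGroup E]
    [SeminormedAddCommGroup F] {f : E → F} {δ r ε : ℝ}
    (hinj : ∀ x y, ‖x‖ < δ → ‖y‖ < δ → ‖x - y‖ ≤ 2 * ‖f x - f y‖)
    {b : E} {y : ℕ → E} {N : ℕ} (hδ : r + ‖b‖ + 2 * ε ≤ δ) (hy : ∀ m ≤ N, ‖y m‖ < r)
    (hf : ∀ m ≤ N, ‖f (m • b) - f (y m)‖ < ε) : ‖N • b - y N‖ < 2 * ε := by
  have hr : 0 < r := (norm_nonneg _).trans_lt (hy 0 N.zero_le)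
  have hε : 0 < ε := (norm_nonneg _).trans_lt (hf 0 N.zero_le)
  have hnear : ∀ m ≤ N, ‖m • b‖ < δ → ‖m • b - y m‖ < 2 * ε := fun m hm hb =>
    (hinj _ _ hb (by linarith [hy m hm, norm_nonneg b])).trans_lt (by linarith [hf m hm])
  have hsmall : ∀ m ≤ N, ‖m • b‖ < δ := by
    intro m
    induction m with
    | zero => intro _; rw [zero_smul, norm_zero]; linarith [norm_nonneg b]
    | succ m ih =>
      intro hm
      have hclose := hnear m (by omega) (ih (by omega))
      calc ‖(m + 1) • b‖ = ‖(m • b - y m) + y m + b‖ := by rw [succ_nsmul]; abel_nf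
        _ ≤ ‖m • b - y m‖ + ‖y m‖ + ‖b‖ := norm_add₃_le
        _ < δ := by linarith [hy m (by omega)]
  exact hnear N le_rfl (hsmall N le_rfl)

section NormedSpace

variable {E : Type*} [SeminormedAddCommGroup E] [NormedSpace ℝ E]

theorem norm_natFloor_mul_smul_sub_le {t s : ℝ} (h : 0 ≤ t * s) (x : E) :
    ‖(⌊t * s⌋₊ : ℝ) • x - t • s • x‖ ≤ ‖x‖ := by
  rw [smul_smul, ← sub_smul, norm_smul, Real.norm_eq_abs]
  have : |(⌊t * s⌋₊ : ℝ) - t * s| ≤ 1 :=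
    abs_le.2 ⟨by linarith [Nat.lt_floor_add_one (t * s)], by linarith [Nat.floor_le h]⟩
  nlinarith [norm_nonneg x]

theorem tendsto_zero_of_tendsto_natCast_smul {B : ℕ → E} {B₀ : E}
    (h : Tendsto (fun k : ℕ => (k : ℝ) • B k) atTop (𝓝 B₀)) : Tendsto B atTop (𝓝 0) := by
  have := (tendsto_inv_atTop_nhds_zero_nat (𝕜 := ℝ)).smul h
  rw [zero_smul] at this
  refine this.congr' ?_
  filter_upwards [eventually_ne_atTop 0] with k hk
  rw [smul_smul, inv_mul_cancel₀ (Nat.cast_ne_zero.2 hk), one_smul]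

theorem tendstoUniformlyOn_natFloor_mul_smul {B : ℕ → E} {B₀ : E}
    (h : Tendsto (fun k : ℕ => (k : ℝ) • B k) atTop (𝓝 B₀)) :
    TendstoUniformlyOn (fun (k : ℕ) (t : ℝ) => (⌊t * k⌋₊ : ℝ) • B k) (fun t => t • B₀) atTop
      (Icc 0 1) := by
  rw [Metric.tendstoUniformlyOn_iff]
  intro ε hε
  have hB := tendsto_zero_of_tendsto_natCast_smul h
  filter_upwards [Metric.tendsto_nhds.1 h _ (half_pos hε),
    Metric.tendsto_nhds.1 hB _ (half_pos hε)] with k hk hBk t ht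
  rw [dist_zero_right] at hBk
  rw [dist_comm] at hk
  have hscale : ‖t • (B₀ - (k : ℝ) • B k)‖ ≤ dist B₀ ((k : ℝ) • B k) := by
    rw [norm_smul, Real.norm_eq_abs, abs_of_nonneg ht.1, ← dist_eq_norm]
    exact mul_le_of_le_one_left dist_nonneg ht.2
  have hfloor := norm_natFloor_mul_smul_sub_le (mul_nonneg ht.1 k.cast_nonneg) (B k)
  calc dist (t • B₀) ((⌊t * k⌋₊ : ℝ) • B k)
      = ‖t • (B₀ - (k : ℝ) • B k) - ((⌊t * k⌋₊ : ℝ) • B k - t • (k : ℝ) • B k)‖ := by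
        rw [dist_eq_norm, smul_sub]; abel_nf
    _ ≤ ‖t • (B₀ - (k : ℝ) • B k)‖ + ‖(⌊t * k⌋₊ : ℝ) • B k - t • (k : ℝ) • B k‖ :=
        norm_sub_le _ _
    _ < ε := by linarith

end NormedSpace

section BanachAlgebra

variable {𝔸 : Type*} [NormedRing 𝔸] [NormedAlgebra ℝ 𝔸] [CompleteSpace 𝔸]

theorem exp_pow_eq_exp_natCast_smul (x : 𝔸) (n : ℕ) : exp x ^ n = exp ((n : ℝ) • x) := by
  let +nondep : NormedAlgebra ℚ 𝔸 := .restrictScalars ℚ ℝ 𝔸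
  rw [Nat.cast_smul_eq_nsmul, exp_nsmul]

theorem tendstoUniformlyOn_exp_pow_natFloor_mul {B : ℕ → 𝔸} {B₀ : 𝔸}
    (h : Tendsto (fun k : ℕ => (k : ℝ) • B k) atTop (𝓝 B₀)) :
    TendstoUniformlyOn (fun (k : ℕ) (t : ℝ) => exp (B k) ^ ⌊t * k⌋₊) (fun t => exp (t • B₀))
      atTop (Icc 0 1) := by
  let +nondep : NormedAlgebra ℚ 𝔸 := .restrictScalars ℚ ℝ 𝔸
  simp_rw [exp_pow_eq_exp_natCast_smul]
  exact (tendstoUniformlyOn_natFloor_mul_smul h).comp_of_isCompact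
    (isCompact_Icc.image (continuous_id.smul continuous_const)) (mapsTo_image _ _)
    fun _ _ => exp_continuous.continuousAt

theorem exists_norm_sub_le_two_mul_norm_exp_sub :
    ∃ δ > 0, ∀ x y : 𝔸, ‖x‖ < δ → ‖y‖ < δ → ‖x - y‖ ≤ 2 * ‖exp x - exp y‖ := by
  have hlin := (hasStrictFDerivAt_iff_isLittleO.1
    (hasStrictFDerivAt_exp_zero (𝕂 := ℝ) (𝔸 := 𝔸))).def (c := 1 / 2) (by norm_num)
  obtain ⟨δ, hδ, hball⟩ := Metric.eventually_nhds_iff.1 hlin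
  refine ⟨δ, hδ, fun x y hx hy => ?_⟩
  have hxy : ‖exp x - exp y - (x - y)‖ ≤ 1 / 2 * ‖x - y‖ := by
    simpa using hball (y := (x, y)) (by simpa [Prod.dist_eq] using ⟨hx, hy⟩)
  have := norm_sub_norm_le (x - y) (exp x - exp y)
  rw [norm_sub_rev (x - y)] at this
  linarith

theorem tendsto_natFloor_mul_smul_sub_of_tendstoUniformlyOn {B : ℕ → 𝔸} {B₀ : 𝔸}
    (hB : Tendsto B atTop (𝓝 0))
    (h : TendstoUniformlyOn (fun (k : ℕ) (t : ℝ) => exp (B k) ^ ⌊t * k⌋₊)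
      (fun t => exp (t • B₀)) atTop (Icc 0 1))
    {δ : ℝ} (hinj : ∀ x y : 𝔸, ‖x‖ < δ → ‖y‖ < δ → ‖x - y‖ ≤ 2 * ‖exp x - exp y‖)
    {t₀ : ℝ} (ht₀ : t₀ ∈ Icc (0 : ℝ) 1) (hB₀ : ‖t₀ • B₀‖ < δ / 4) :
    Tendsto (fun k : ℕ => (⌊t₀ * k⌋₊ : ℝ) • B k - ((⌊t₀ * k⌋₊ : ℝ) / k) • B₀) atTop (𝓝 0) := by
  have hδ : 0 < δ := by linarith [norm_nonneg (t₀ • B₀)]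
  rw [Metric.tendsto_nhds]
  intro η hη
  obtain ⟨ε, hε, hεη, hεδ⟩ : ∃ ε > 0, ε ≤ η / 2 ∧ ε ≤ δ / 8 :=
    ⟨min (η / 2) (δ / 8), by positivity, min_le_left _ _, min_le_right _ _⟩
  filter_upwards [Metric.tendstoUniformlyOn_iff.1 h ε hε,
    Metric.tendsto_nhds.1 hB (δ / 4) (by positivity), eventually_ne_atTop 0] with k hk hBk hk0
  rw [dist_zero_right] at hBk ⊢
  have hk0' : (k : ℝ) ≠ 0 := Nat.cast_ne_zero.2 hk0
  have hfloor : ∀ m : ℕ, ⌊(m / k : ℝ) * k⌋₊ = m := fun m => by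
    rw [div_mul_cancel₀ _ hk0', Nat.floor_natCast]
  have hle : ∀ m ≤ ⌊t₀ * k⌋₊, (m / k : ℝ) ≤ t₀ := fun m hm => by
    rw [div_le_iff₀ (by positivity)]
    exact (Nat.cast_le.2 hm).trans (Nat.floor_le (mul_nonneg ht₀.1 k.cast_nonneg))
  rw [Nat.cast_smul_eq_nsmul]
  refine (norm_nsmul_sub_lt_of_forall_norm_apply_sub_lt hinj (y := fun m : ℕ => (m / k : ℝ) • B₀)
    (r := δ / 4) (ε := ε) (by linarith) ?_ ?_).trans_le (by linarith)
  · intro m hm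
    refine lt_of_le_of_lt ?_ hB₀
    rw [norm_smul, norm_smul, Real.norm_of_nonneg (by positivity), Real.norm_of_nonneg ht₀.1]
    exact mul_le_mul_of_nonneg_right (hle m hm) (norm_nonneg _)
  · intro m hm
    have hmk : (m / k : ℝ) ∈ Icc (0 : ℝ) 1 := ⟨by positivity, (hle m hm).trans ht₀.2⟩
    have := hk _ hmk
    rwa [hfloor, exp_pow_eq_exp_natCast_smul, Nat.cast_smul_eq_nsmul, dist_comm,
      dist_eq_norm] at this

theorem tendsto_natCast_smul_of_tendstoUniformlyOn_exp_pow_natFloor_mul {B : ℕ → 𝔸}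
    {B₀ : 𝔸} (hB : Tendsto B atTop (𝓝 0))
    (h : TendstoUniformlyOn (fun (k : ℕ) (t : ℝ) => exp (B k) ^ ⌊t * k⌋₊)
      (fun t => exp (t • B₀)) atTop (Icc 0 1)) :
    Tendsto (fun k : ℕ => (k : ℝ) • B k) atTop (𝓝 B₀) := by
  obtain ⟨δ, hδ, hinj⟩ := exists_norm_sub_le_two_mul_norm_exp_sub (𝔸 := 𝔸)
  have hunit : ∀ᶠ t in 𝓝[>] (0 : ℝ), t ∈ Icc (0 : ℝ) 1 := Icc_mem_nhdsGT one_pos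
  have hsmall : ∀ᶠ t in 𝓝 (0 : ℝ), ‖t • B₀‖ < δ / 4 := by
    have hcont := (continuous_id.smul continuous_const).tendsto' 0 0 (zero_smul ℝ B₀)
    exact (tendsto_norm_zero.comp hcont).eventually (gt_mem_nhds (by positivity))
  obtain ⟨t₀, ⟨ht₀, hB₀⟩, ht₀pos⟩ :=
    ((hunit.and (nhdsWithin_le_nhds hsmall)).and self_mem_nhdsWithin).exists
  have hdiff := tendsto_natFloor_mul_smul_sub_of_tendstoUniformlyOn hB h hinj ht₀ hB₀
  have hfloor : Tendsto (fun k : ℕ => (⌊t₀ * k⌋₊ : ℝ) • B k - t₀ • (k : ℝ) • B k) atTop (𝓝 0) :=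
    squeeze_zero_norm (fun k => norm_natFloor_mul_smul_sub_le (mul_nonneg ht₀.1 k.cast_nonneg) _)
      (tendsto_norm_zero.comp hB)
  have hratio : Tendsto (fun k : ℕ => (⌊t₀ * k⌋₊ : ℝ) / k) atTop (𝓝 t₀) :=
    (tendsto_nat_floor_mul_div_atTop ht₀.1).comp tendsto_natCast_atTop_atTop
  have hscaled : Tendsto (fun k : ℕ => t₀ • (k : ℝ) • B k) atTop (𝓝 (t₀ • B₀)) := by
    have := (hratio.smul_const B₀).add (hdiff.sub hfloor)
    simp only [sub_self, add_zero, sub_sub_sub_cancel_left, add_sub_cancel] at this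
    exact this
  simpa only [inv_smul_smul₀ (ne_of_gt ht₀pos)] using hscaled.const_smul t₀⁻¹

end BanachAlgebra

/-- For a sequence `B n → 0` in the Lie algebra (here: matrices, with the
matrix exponential), `exp(B n) ^ ⌊t n⌋ → exp (t • B₀)` uniformly in `t ∈ [0,1]` iff
`n • B n → B₀`. -/
theorem levy_exp_power_uniform_iff {d : ℕ}
    (B : ℕ → Matrix (Fin d) (Fin d) ℝ) (B₀ : Matrix (Fin d) (Fin d) ℝ)
    (hB : Tendsto B atTop (𝓝 0)) :
    TendstoUniformlyOn
        (fun (k : ℕ) => fun (t : ℝ) => (NormedSpace.exp (B k)) ^ (⌊t * (k : ℝ)⌋₊))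
        (fun t => NormedSpace.exp (t • B₀)) atTop (Set.Icc (0 : ℝ) 1) ↔
      Tendsto (fun k : ℕ => (k : ℝ) • B k) atTop (𝓝 B₀) := by
  -- Both sides only see the topology of the matrices, so any submultiplicative norm will do.
  let : NormedRing (Matrix (Fin d) (Fin d) ℝ) := Matrix.linftyOpNormedRing
  let : NormedAlgebra ℝ (Matrix (Fin d) (Fin d) ℝ) := Matrix.linftyOpNormedAlgebra
  exact ⟨tendsto_natCast_smul_of_tendstoUniformlyOn_exp_pow_natFloor_mul hB,
    tendstoUniformlyOn_exp_pow_natFloor_mul⟩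
end

section
/- Let $(E,d)$ be a metric space and $\mathbf x \in C([0,T],E)$ a continuous path such that there do not exist $s < t$ in $[0,T]$ with $\mathbf x_u = \mathbf x_s$ for all $u \in (s,t)$. Let $\Lambda$ denote the set of continuous non-decreasing surjections $\lambda : [0,T] \to [0,T]$. Then the set $\{\mathbf x \circ \lambda \mid \lambda \in \Lambda\}$ is closed in $C([0,T],E)$ with the uniform topology. -/
/-! Let `x ∘ lᵢ → y` uniformly along an ultrafilter. By compactness the `lᵢ` converge pointwise
to a monotone `L`, and `y = x ∘ L`. If `L` missed a value, being monotone it would jump over a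
nonempty open interval `(a, b)` at some time `t₀`. For `u ∈ (a, b)` and any small interval
`[s₁, s₂]` around `t₀`, eventually `lᵢ s₁ ≤ u ≤ lᵢ s₂`, so by the intermediate value theorem
`x u` is a uniform limit of values of `y` on `[s₁, s₂]`; hence `x u = y t₀`, and `x` would be
constant on `(a, b)`. So `L` is surjective, and a monotone surjection is continuous. -/

open Set Filter Topology

theorem eq_of_forall_mem_nhds_mem_image {X Y : Type*} [TopologicalSpace X] [TopologicalSpace Y]
    [T1Space Y] {f : X → Y} (hf : Continuous f) {a : X} {b : Y}
    (h : ∀ U ∈ 𝓝 a, b ∈ f '' U) : f a = b := by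
  have : a ∈ closure (f ⁻¹' {b}) := mem_closure_iff_nhds.2 fun U hU =>
    let ⟨c, hc, hcb⟩ := h U hU
    ⟨c, hc, hcb⟩
  exact (isClosed_singleton.preimage hf).closure_subset this

theorem Monotone.exists_gap_of_notMem_range {α β : Type*} [LinearOrder α] [TopologicalSpace α]
    [OrderTopology α] [PreconnectedSpace α] [LinearOrder β] {L : α → β} (hL : Monotone L)
    {v : β} (hv : v ∉ range L) {s t : α} (hs : L s < v) (ht : v < L t) :
    ∃ t₀ a b, a < b ∧
      ∀ U ∈ 𝓝 t₀, ∃ s₁ s₂, s₁ ≤ s₂ ∧ Icc s₁ s₂ ⊆ U ∧ L s₁ ≤ a ∧ b ≤ L s₂ := by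
  set A := {s | L s < v}
  have hAv : ∀ s, s ∉ A ↔ v < L s := fun s =>
    not_lt.trans (le_iff_lt_or_eq.trans (or_iff_left fun h => hv ⟨s, h.symm⟩))
  have hA : ¬ IsClopen A := fun h => (isClopen_iff.mp h).elim
    (fun h' => (h'.subset hs : s ∈ (∅ : Set α))) (fun h' => (hAv t).2 ht (h' ▸ mem_univ t))
  rcases not_and_or.mp hA with hclosed | hopen
  · rw [← isOpen_compl_iff, isOpen_iff_mem_nhds] at hclosed
    push Not at hclosed
    obtain ⟨t₀, ht₀, hnhds⟩ := hclosed
    refine ⟨t₀, v, L t₀, (hAv t₀).1 ht₀, fun U hU => ?_⟩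
    obtain ⟨b, c, hbc, hIcc, hsub⟩ := exists_Icc_mem_subset_of_mem_nhds hU
    obtain ⟨s, hs, hsA⟩ := not_subset.mp fun h => hnhds (mem_of_superset hIcc h)
    replace hsA : L s < v := not_not.mp hsA
    have hst : s ≤ t₀ := le_of_not_gt fun h => ((hAv t₀).1 ht₀).not_gt ((hL h.le).trans_lt hsA)
    exact ⟨s, t₀, hst, (Icc_subset_Icc hs.1 hbc.2).trans hsub, hsA.le, le_rfl⟩
  · rw [isOpen_iff_mem_nhds] at hopen
    push Not at hopen
    obtain ⟨t₀, ht₀, hnhds⟩ := hopen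
    refine ⟨t₀, L t₀, v, ht₀, fun U hU => ?_⟩
    obtain ⟨b, c, hbc, hIcc, hsub⟩ := exists_Icc_mem_subset_of_mem_nhds hU
    obtain ⟨s, hs, hsA⟩ := not_subset.mp fun h => hnhds (mem_of_superset hIcc h)
    have hts : t₀ ≤ s := le_of_not_gt fun h => hsA ((hL h.le).trans_lt ht₀)
    exact ⟨t₀, s, hts, (Icc_subset_Icc hbc.1 hs.2).trans hsub, le_rfl, ((hAv s).1 hsA).le⟩

section ReparametrisationLimit

variable {ι α β E : Type*} [ConditionallyCompleteLinearOrder α] [TopologicalSpace α]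
  [OrderTopology α] [DenselyOrdered α] [LinearOrder β] [TopologicalSpace β]
  [OrderClosedTopology β] [MetricSpace E] {F : Filter ι} [F.NeBot] {l : ι → C(α, β)}
  {x : β → E} {y : α → E}

theorem mem_image_Icc_of_tendstoUniformly_comp (hy : Continuous y)
    (hxy : TendstoUniformly (fun i => x ∘ l i) y F) {s₁ s₂ : α} (hs : s₁ ≤ s₂) {u : β}
    (h₁ : ∀ᶠ i in F, l i s₁ ≤ u) (h₂ : ∀ᶠ i in F, u ≤ l i s₂) : x u ∈ y '' Icc s₁ s₂ := by
  rw [← (isCompact_Icc.image hy).isClosed.closure_eq, Metric.mem_closure_iff]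
  intro ε hε
  obtain ⟨i, hi₁, hi₂, hi⟩ := (h₁.and (h₂.and (Metric.tendstoUniformly_iff.mp hxy ε hε))).exists
  obtain ⟨s, hs', rfl⟩ := intermediate_value_Icc hs (l i).continuous.continuousOn ⟨hi₁, hi₂⟩
  exact ⟨y s, mem_image_of_mem y hs', dist_comm (y s) _ ▸ hi s⟩

theorem eqOn_Ioo_of_tendstoUniformly_comp (hy : Continuous y)
    (hxy : TendstoUniformly (fun i => x ∘ l i) y F) {L : α → β}
    (hL : ∀ t, Tendsto (fun i => l i t) F (𝓝 (L t))) {t₀ : α} {a b : β}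
    (hgap : ∀ U ∈ 𝓝 t₀, ∃ s₁ s₂, s₁ ≤ s₂ ∧ Icc s₁ s₂ ⊆ U ∧ L s₁ ≤ a ∧ b ≤ L s₂) :
    EqOn x (fun _ => y t₀) (Ioo a b) := by
  intro u hu
  refine (eq_of_forall_mem_nhds_mem_image hy fun U hU => ?_).symm
  obtain ⟨s₁, s₂, hs, hsub, ha, hb⟩ := hgap U hU
  refine image_mono hsub (mem_image_Icc_of_tendstoUniformly_comp hy hxy hs ?_ ?_)
  · exact ((hL s₁).eventually_lt_const (ha.trans_lt hu.1)).mono fun _ => le_of_lt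
  · exact ((hL s₂).eventually_const_lt (hu.2.trans_le hb)).mono fun _ => le_of_lt

theorem surjective_of_tendstoUniformly_comp [CompactSpace α] [DenselyOrdered β]
    (hl : ∀ᶠ i in F, Monotone (l i) ∧ Function.Surjective (l i)) (hy : Continuous y)
    (hxy : TendstoUniformly (fun i => x ∘ l i) y F) {L : α → β}
    (hL : ∀ t, Tendsto (fun i => l i t) F (𝓝 (L t))) (hLmono : Monotone L)
    (hx : ¬ ∃ s t, s < t ∧ ∀ u, s < u → u < t → x u = x s) : Function.Surjective L := by
  intro v
  by_contra hv
  obtain ⟨i, -, hi⟩ := hl.exists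
  have : Nonempty α := ⟨(hi v).choose⟩
  obtain ⟨m, -, hm⟩ := isCompact_univ.exists_isLeast (univ_nonempty (α := α))
  obtain ⟨M, -, hM⟩ := isCompact_univ.exists_isGreatest (univ_nonempty (α := α))
  have hLm : L m ≤ v := le_of_tendsto (hL m) <| hl.mono fun i ⟨hmono, hsurj⟩ => by
    obtain ⟨s, rfl⟩ := hsurj v
    exact hmono (hm (mem_univ s))
  have hLM : v ≤ L M := ge_of_tendsto (hL M) <| hl.mono fun i ⟨hmono, hsurj⟩ => by
    obtain ⟨s, rfl⟩ := hsurj v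
    exact hmono (hM (mem_univ s))
  obtain ⟨t₀, a, b, hab, hgap⟩ := hLmono.exists_gap_of_notMem_range hv
    (hLm.lt_of_ne fun h => hv ⟨m, h⟩) (hLM.lt_of_ne' fun h => hv ⟨M, h⟩)
  have hconst := eqOn_Ioo_of_tendstoUniformly_comp hy hxy hL hgap
  obtain ⟨c, hac, hcb⟩ := exists_between hab
  exact hx ⟨c, b, hcb, fun u hcu hub =>
    (hconst ⟨hac.trans hcu, hub⟩).trans (hconst ⟨hac, hcb⟩).symm⟩

end ReparametrisationLimit

theorem isClosed_setOf_eq_comp_monotone_surjective {α β E : Type*}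
    [ConditionallyCompleteLinearOrder α] [TopologicalSpace α] [OrderTopology α]
    [DenselyOrdered α] [CompactSpace α] [LinearOrder β] [TopologicalSpace β] [OrderTopology β]
    [DenselyOrdered β] [CompactSpace β] [MetricSpace E] (x : C(β, E))
    (hx : ¬ ∃ s t, s < t ∧ ∀ u, s < u → u < t → x u = x s) :
    IsClosed {y : C(α, E) | ∃ l : C(α, β), Monotone l ∧ Function.Surjective l ∧ y = x.comp l} := by
  refine isClosed_of_closure_subset fun y hy => ?_
  have hS : {y : C(α, E) | ∃ l : C(α, β), Monotone l ∧ Function.Surjective l ∧ y = x.comp l} =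
      x.comp '' {l | Monotone l ∧ Function.Surjective l} := by
    ext y; simp [eq_comm, and_assoc]
  rw [hS, mem_closure_iff_clusterPt, ← map_principal] at hy
  obtain ⟨𝒰, h𝒰, hxy⟩ := mapClusterPt_iff_ultrafilter.mp hy
  have hL : ∀ t, ∃ L, Tendsto (fun l : C(α, β) => l t) 𝒰 (𝓝 L) := fun t =>
    let ⟨L, _, hL⟩ := isCompact_univ.ultrafilter_le_nhds (𝒰.map fun l : C(α, β) => l t) (by simp)
    ⟨L, hL⟩
  choose L hL using hL
  have hl : ∀ᶠ l : C(α, β) in 𝒰, Monotone l ∧ Function.Surjective l := le_principal_iff.mp h𝒰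
  have hLmono : Monotone L := fun s t hst =>
    le_of_tendsto_of_tendsto (hL s) (hL t) (hl.mono fun l hl => hl.1 hst)
  have hxy' : TendstoUniformly (fun l : C(α, β) => x ∘ l) y 𝒰 :=
    ContinuousMap.tendsto_iff_tendstoUniformly.mp hxy
  have hLsurj := surjective_of_tendstoUniformly_comp (l := id) hl y.continuous hxy' hL hLmono hx
  refine ⟨⟨L, hLmono.continuous_of_surjective hLsurj⟩, hLmono, hLsurj, ?_⟩
  ext t
  exact tendsto_nhds_unique ((continuous_eval_const t).tendsto y |>.comp hxy)
    (x.continuous.tendsto _ |>.comp (hL t))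

theorem reparametrisations_isClosed_general {E : Type*} [MetricSpace E]
    (T : ℝ) (x : C(Set.Icc (0 : ℝ) T, E))
    (hx : ¬ ∃ s t : Set.Icc (0 : ℝ) T, s < t ∧ ∀ u, s < u → u < t → x u = x s) :
    IsClosed {y : C(Set.Icc (0 : ℝ) T, E) |
      ∃ l : C(Set.Icc (0 : ℝ) T, Set.Icc (0 : ℝ) T),
        Monotone (⇑l) ∧ Function.Surjective (⇑l) ∧ y = x.comp l} := by
  rcases isEmpty_or_nonempty (Set.Icc (0 : ℝ) T) with hI | ⟨⟨t⟩⟩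
  · exact Set.Subsingleton.isClosed fun _ _ _ _ => ContinuousMap.ext isEmptyElim
  · have : Inhabited (Set.Icc (0 : ℝ) T) := ⟨t⟩
    exact isClosed_setOf_eq_comp_monotone_surjective x hx

/-- Let `x : [0,T] → E` be a continuous path which is not constant on any
nonempty open subinterval. Then the set of reparametrisations `{x ∘ λ | λ ∈ Λ}`, where `Λ`
is the set of continuous non-decreasing surjections `[0,T] → [0,T]`, is closed in
`C([0,T], E)` with the uniform (compact-open) topology. -/
theorem reparametrisations_isClosed {E : Type*} [MetricSpace E]
    (T : ℝ) (hT : 0 < T) (x : C(Set.Icc (0 : ℝ) T, E))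
    (hx : ¬ ∃ s t : Set.Icc (0 : ℝ) T, s < t ∧ ∀ u, s < u → u < t → x u = x s) :
    IsClosed {y : C(Set.Icc (0 : ℝ) T, E) |
      ∃ l : C(Set.Icc (0 : ℝ) T, Set.Icc (0 : ℝ) T),
        Monotone (⇑l) ∧ Function.Surjective (⇑l) ∧ y = x.comp l} :=
  reparametrisations_isClosed_general T x hx
end

section
/- Let $(E,d)$ be a metric space, $\mathbf x : [0,T] \to E$ any function, $(I_n)_{n\geq 1} = ((c_n,d_n))_{n\geq 1}$ a countable collection of disjoint open subintervals of $[0,T]$ with union $I$, and define $\mathbf y : [0,T] \to E$ by $\mathbf y_t = \mathbf x_t$ for $t \notin I$ and $\mathbf y_t = \mathbf x_{c_n}$ for $t \in (c_n,d_n)$. Then for every $p \geq 1$, setting $C = 1 + 2^p + 3^{p-1}$, we have $\|\mathbf x\|_{p\text{-var};[0,T]}^p \leq (C + 3^{p-1}) \sum_{n=1}^\infty \|\mathbf x\|_{p\text{-var};[c_n,d_n]}^p + C \|\mathbf y\|_{p\text{-var};[0,T]}^p$. -/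
/-!
Fix a partition `u₀ ≤ ⋯ ≤ u_N` of `[0,T]`. The increments of `x` with both endpoints in one
interval `Iₙ` are part of a partition of `[cₙ,dₙ]`, so together they cost at most
`∑ₙ ‖x‖_{p-var;[cₙ,dₙ]}^p`. Every other increment is split through `y`,
`d(x_s,x_t) ≤ d(x_s,y_s) + d(y_s,y_t) + d(y_t,x_t)`, and `(a+b+c)^p ≤ 3^{p-1}(a^p+b^p+c^p)`;
the middle terms form a partition sum of `y`. The gap `d(x_t,y_t)` vanishes off `I`, and for
`t ∈ Iₙ` it is `d(x_{cₙ},x_t)`, whose `p`-th power is at most `‖x‖_{p-var;[cₙ,dₙ]}^p`. Since `Iₙ`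
is an interval, a monotone partition leaves it at most once and enters it at most once, so each
`Iₙ` is charged at most twice more.
-/

open Set
open scoped ENNReal

/-- `eVar p x s t = ‖x‖_{p-var;[s,t]}^p ∈ [0,∞]`: the supremum, over all partitions
`s = u₀ ≤ u₁ ≤ ⋯ ≤ uₙ = t`, of `∑ edist (x uᵢ) (x uᵢ₊₁) ^ p`. -/
noncomputable def eVar {E : Type*} [PseudoEMetricSpace E] (p : ℝ) (x : ℝ → E) (s t : ℝ) :
    ℝ≥0∞ :=
  ⨆ (n : ℕ) (u : ℕ → ℝ) (_ : Monotone u) (_ : u 0 = s) (_ : u n = t),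
    ∑ i ∈ Finset.range n, edist (x (u i)) (x (u (i + 1))) ^ p

open Finset

theorem ENNReal.rpow_add_add_le_mul_rpow_add_rpow_add_rpow (a b c : ℝ≥0∞) {p : ℝ} (hp : 1 ≤ p) :
    (a + b + c) ^ p ≤ 3 ^ (p - 1) * (a ^ p + b ^ p + c ^ p) := by
  simpa [Fin.sum_univ_three, add_assoc] using
    ENNReal.rpow_sum_le_const_mul_sum_rpow (s := univ) (f := ![a, b, c]) hp

theorem ENNReal.le_tsum_ite {ι : Type*} {q : ι → Prop} [DecidablePred q] {a : ℝ≥0∞} {n : ι}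
    (h : q n) : a ≤ ∑' m, if q m then a else 0 := by
  simpa [h] using ENNReal.le_tsum (f := fun m => if q m then a else 0) n

theorem sum_ite_le_of_subsingleton {ι : Type*} (S : Finset ι) {q : ι → Prop} [DecidablePred q]
    (hq : {i | q i}.Subsingleton) {f : ι → ℝ≥0∞} {M : ℝ≥0∞} (hf : ∀ i, q i → f i ≤ M) :
    ∑ i ∈ S, (if q i then f i else 0) ≤ M := by
  have hcard : #(S.filter q) ≤ 1 :=
    card_le_one.2 fun i hi j hj => hq (mem_filter.1 hi).2 (mem_filter.1 hj).2
  calc ∑ i ∈ S, (if q i then f i else 0) = ∑ i ∈ S.filter q, f i := (sum_filter _ _).symm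
    _ ≤ #(S.filter q) • M := sum_le_card_nsmul _ _ _ fun i hi => hf i (mem_filter.1 hi).2
    _ ≤ M := by simpa using mul_le_of_le_one_left (zero_le (a := M)) (Nat.cast_le_one.2 hcard)

namespace Monotone

variable {α : Type*} [Preorder α] {u : ℕ → α} {J : Set α} [J.OrdConnected]

theorem mem_of_mem_of_mem (hu : Monotone u) {i j k : ℕ} (hij : i ≤ j) (hjk : j ≤ k)
    (hi : u i ∈ J) (hk : u k ∈ J) : u j ∈ J :=
  Set.OrdConnected.out' hi hk ⟨hu hij, hu hjk⟩

theorem subsingleton_exits (hu : Monotone u) : {i | u i ∈ J ∧ u (i + 1) ∉ J}.Subsingleton := by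
  have key : ∀ i j, i < j → u i ∈ J → u j ∈ J → u (i + 1) ∈ J := fun i j hij hi hj =>
    hu.mem_of_mem_of_mem i.le_succ hij hi hj
  intro i hi j hj
  by_contra hne
  rcases Nat.lt_or_gt_of_ne hne with h | h
  · exact hi.2 (key i j h hi.1 hj.1)
  · exact hj.2 (key j i h hj.1 hi.1)

theorem subsingleton_entries (hu : Monotone u) : {i | u i ∉ J ∧ u (i + 1) ∈ J}.Subsingleton := by
  have key : ∀ i j, i < j → u (i + 1) ∈ J → u (j + 1) ∈ J → u j ∈ J := fun i j hij hi hj =>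
    hu.mem_of_mem_of_mem hij j.le_succ hi hj
  intro i hi j hj
  by_contra hne
  rcases Nat.lt_or_gt_of_ne hne with h | h
  · exact hj.1 (key i j h hi.2 hj.2)
  · exact hi.1 (key j i h hj.2 hi.2)

end Monotone

section eVar

variable {E : Type*} [PseudoEMetricSpace E] {p : ℝ} {x : ℝ → E} {s t : ℝ}

theorem sum_le_eVar {n : ℕ} {u : ℕ → ℝ} (hu : Monotone u) (h0 : u 0 = s) (hn : u n = t) :
    ∑ i ∈ range n, edist (x (u i)) (x (u (i + 1))) ^ p ≤ eVar p x s t :=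
  le_iSup_of_le n <| le_iSup_of_le u <| le_iSup_of_le hu <| le_iSup_of_le h0 <|
    le_iSup_of_le hn le_rfl

theorem eVar_le {M : ℝ≥0∞}
    (h : ∀ n (u : ℕ → ℝ), Monotone u → u 0 = s → u n = t →
      ∑ i ∈ range n, edist (x (u i)) (x (u (i + 1))) ^ p ≤ M) :
    eVar p x s t ≤ M :=
  iSup_le fun n => iSup_le fun u => iSup_le fun hu => iSup_le fun h0 => iSup_le (h n u hu h0)

theorem eVar_mono_left {s' : ℝ} (hs : s' ≤ s) : eVar p x s t ≤ eVar p x s' t := by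
  refine eVar_le fun n u hu h0 hn => ?_
  let v : ℕ → ℝ := fun j => if j = 0 then s' else u (j - 1)
  have hv : Monotone v := by
    refine monotone_nat_of_le_succ fun j => ?_
    rcases j with _ | j
    · simpa [v, h0] using hs
    · simpa [v] using hu j.le_succ
  calc ∑ i ∈ range n, edist (x (u i)) (x (u (i + 1))) ^ p
      ≤ ∑ i ∈ range (n + 1), edist (x (v i)) (x (v (i + 1))) ^ p := by
        rw [sum_range_succ']
        simp only [v, Nat.add_one_ne_zero, if_false, Nat.add_sub_cancel]
        exact le_self_add
    _ ≤ eVar p x s' t := sum_le_eVar hv rfl (by simpa [v] using hn)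

theorem eVar_mono_right {t' : ℝ} (ht : t ≤ t') : eVar p x s t ≤ eVar p x s t' := by
  refine eVar_le fun n u hu h0 hn => ?_
  let v : ℕ → ℝ := fun j => if j ≤ n then u j else t'
  have hv : Monotone v := by
    refine monotone_nat_of_le_succ fun j => ?_
    rcases lt_trichotomy j n with h | rfl | h
    · simpa [v, h.le, Nat.succ_le_of_lt h] using hu j.le_succ
    · simpa [v, hn] using ht
    · simp [v, h.not_ge, (h.trans j.lt_succ_self).not_ge]
  calc ∑ i ∈ range n, edist (x (u i)) (x (u (i + 1))) ^ p
      = ∑ i ∈ range n, edist (x (v i)) (x (v (i + 1))) ^ p := by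
        refine sum_congr rfl fun i hi => ?_
        have hi : i < n := mem_range.1 hi
        simp [v, hi.le, Nat.succ_le_of_lt hi]
    _ ≤ ∑ i ∈ range (n + 1), edist (x (v i)) (x (v (i + 1))) ^ p := by
        rw [sum_range_succ]
        exact le_self_add
    _ ≤ eVar p x s t' := sum_le_eVar hv (by simpa [v] using h0) (by simp [v])

theorem eVar_mono {s' t' : ℝ} (hs : s' ≤ s) (ht : t ≤ t') : eVar p x s t ≤ eVar p x s' t' :=
  (eVar_mono_left hs).trans (eVar_mono_right ht)

theorem edist_rpow_le_eVar (hst : s ≤ t) : edist (x s) (x t) ^ p ≤ eVar p x s t := by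
  have hu : Monotone fun j : ℕ => if j = 0 then s else t := by
    refine monotone_nat_of_le_succ fun j => ?_
    rcases j with _ | j <;> simp [hst]
  simpa using sum_le_eVar (x := x) (p := p) (n := 1) hu rfl rfl

theorem sum_Ico_le_eVar {u : ℕ → ℝ} (hu : Monotone u) (a b : ℕ) :
    ∑ i ∈ Ico a b, edist (x (u i)) (x (u (i + 1))) ^ p ≤ eVar p x (u a) (u b) := by
  rcases le_or_gt a b with hab | hba
  · rw [sum_Ico_eq_sum_range]
    exact sum_le_eVar (fun i j hij => hu (Nat.add_le_add_left hij a)) rfl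
      (by rw [Nat.add_sub_cancel' hab])
  · simp [Finset.Ico_eq_empty_of_le hba.le]

theorem sum_le_eVar_of_forall_mem {u : ℕ → ℝ} (hu : Monotone u) (S : Finset ℕ)
    (hS : ∀ i ∈ S, s ≤ u i ∧ u (i + 1) ≤ t) :
    ∑ i ∈ S, edist (x (u i)) (x (u (i + 1))) ^ p ≤ eVar p x s t := by
  rcases S.eq_empty_or_nonempty with rfl | hne
  · simp
  calc ∑ i ∈ S, edist (x (u i)) (x (u (i + 1))) ^ p
      ≤ ∑ i ∈ Ico (S.min' hne) (S.max' hne + 1), edist (x (u i)) (x (u (i + 1))) ^ p :=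
        sum_le_sum_of_subset fun i hi =>
          mem_Ico.2 ⟨S.min'_le i hi, Nat.lt_succ_of_le (S.le_max' i hi)⟩
    _ ≤ eVar p x (u (S.min' hne)) (u (S.max' hne + 1)) := sum_Ico_le_eVar hu _ _
    _ ≤ eVar p x s t := eVar_mono (hS _ (S.min'_mem hne)).1 (hS _ (S.max'_mem hne)).2

end eVar

section Flatten

variable {E : Type*} [PseudoEMetricSpace E] {p : ℝ}

-- Each term is charged to every `J n` that witnesses its case; summing over `n` spares choosing one.
open Classical in
theorem edist_rpow_le_flatten {α ι : Type*} (hp : 1 ≤ p) {J : ι → Set α} {x y : α → E} {s t : α}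
    (hs : (∀ n, s ∉ J n) → y s = x s) (ht : (∀ n, t ∉ J n) → y t = x t) :
    edist (x s) (x t) ^ p ≤
      (∑' n, if s ∈ J n ∧ t ∈ J n then edist (x s) (x t) ^ p else 0) +
        3 ^ (p - 1) * ((∑' n, if s ∈ J n ∧ t ∉ J n then edist (x s) (y s) ^ p else 0) +
          (∑' n, if s ∉ J n ∧ t ∈ J n then edist (x t) (y t) ^ p else 0) +
          edist (y s) (y t) ^ p) := by
  have hp0 : 0 < p := zero_lt_one.trans_le hp
  by_cases hsame : ∃ n, s ∈ J n ∧ t ∈ J n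
  · obtain ⟨n, hn⟩ := hsame
    exact le_add_right (ENNReal.le_tsum_ite hn)
  push Not at hsame
  have gap_s : edist (x s) (y s) ^ p ≤
      ∑' n, if s ∈ J n ∧ t ∉ J n then edist (x s) (y s) ^ p else 0 := by
    by_cases hs' : ∃ n, s ∈ J n
    · obtain ⟨n, hn⟩ := hs'
      exact ENNReal.le_tsum_ite ⟨hn, hsame n hn⟩
    · rw [hs (not_exists.1 hs'), edist_self, ENNReal.zero_rpow_of_pos hp0]
      exact zero_le
  have gap_t : edist (x t) (y t) ^ p ≤
      ∑' n, if s ∉ J n ∧ t ∈ J n then edist (x t) (y t) ^ p else 0 := by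
    by_cases ht' : ∃ n, t ∈ J n
    · obtain ⟨n, hn⟩ := ht'
      exact ENNReal.le_tsum_ite ⟨fun h => hsame n h hn, hn⟩
    · rw [ht (not_exists.1 ht'), edist_self, ENNReal.zero_rpow_of_pos hp0]
      exact zero_le
  refine le_add_left ?_
  calc edist (x s) (x t) ^ p
      ≤ (edist (x s) (y s) + edist (y s) (y t) + edist (y t) (x t)) ^ p :=
        ENNReal.rpow_le_rpow (edist_triangle4 _ _ _ _) hp0.le
    _ ≤ 3 ^ (p - 1) * (edist (x s) (y s) ^ p + edist (y s) (y t) ^ p + edist (y t) (x t) ^ p) :=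
        ENNReal.rpow_add_add_le_mul_rpow_add_rpow_add_rpow _ _ _ hp
    _ ≤ _ := by
        rw [edist_comm (y t), add_right_comm]
        gcongr

variable {x y : ℝ → E} {u : ℕ → ℝ} {J : Set ℝ} {a b : ℝ}

theorem edist_rpow_le_eVar_of_eq_left {t : ℝ} (ht : t ∈ Icc a b) (hy : y t = x a) :
    edist (x t) (y t) ^ p ≤ eVar p x a b := by
  rw [hy, edist_comm]
  exact (edist_rpow_le_eVar ht.1).trans (eVar_mono le_rfl ht.2)

open Classical in
theorem sum_ite_mem_mem_le_eVar (hu : Monotone u) (hJ : J ⊆ Icc a b) (S : Finset ℕ) :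
    ∑ i ∈ S, (if u i ∈ J ∧ u (i + 1) ∈ J then edist (x (u i)) (x (u (i + 1))) ^ p else 0) ≤
      eVar p x a b := by
  rw [← sum_filter]
  exact sum_le_eVar_of_forall_mem hu _ fun i hi =>
    ⟨(hJ (mem_filter.1 hi).2.1).1, (hJ (mem_filter.1 hi).2.2).2⟩

open Classical in
theorem sum_ite_mem_not_mem_le_eVar (hu : Monotone u) [J.OrdConnected] (hJ : J ⊆ Icc a b)
    (hy : ∀ t ∈ J, y t = x a) (S : Finset ℕ) :
    ∑ i ∈ S, (if u i ∈ J ∧ u (i + 1) ∉ J then edist (x (u i)) (y (u i)) ^ p else 0) ≤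
      eVar p x a b :=
  sum_ite_le_of_subsingleton S hu.subsingleton_exits fun _ hi =>
    edist_rpow_le_eVar_of_eq_left (hJ hi.1) (hy _ hi.1)

open Classical in
theorem sum_ite_not_mem_mem_le_eVar (hu : Monotone u) [J.OrdConnected] (hJ : J ⊆ Icc a b)
    (hy : ∀ t ∈ J, y t = x a) (S : Finset ℕ) :
    ∑ i ∈ S, (if u i ∉ J ∧ u (i + 1) ∈ J then edist (x (u (i + 1))) (y (u (i + 1))) ^ p else 0) ≤
      eVar p x a b :=
  sum_ite_le_of_subsingleton S hu.subsingleton_entries fun _ hi =>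
    edist_rpow_le_eVar_of_eq_left (hJ hi.2) (hy _ hi.2)

theorem sum_edist_rpow_le_flatten (hp : 1 ≤ p) {J : ℕ → Set ℝ} [∀ n, (J n).OrdConnected]
    {c d : ℕ → ℝ} (hJ : ∀ n, J n ⊆ Icc (c n) (d n)) (hy : ∀ n, ∀ t ∈ J n, y t = x (c n))
    (hu : Monotone u) {N : ℕ} (hflat : ∀ i ≤ N, (∀ n, u i ∉ J n) → y (u i) = x (u i)) :
    ∑ i ∈ range N, edist (x (u i)) (x (u (i + 1))) ^ p ≤
      ∑' n, eVar p x (c n) (d n) + 3 ^ (p - 1) * (∑' n, eVar p x (c n) (d n) +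
        ∑' n, eVar p x (c n) (d n) + ∑ i ∈ range N, edist (y (u i)) (y (u (i + 1))) ^ p) := by
  classical
  refine (sum_le_sum fun i hi => edist_rpow_le_flatten (J := J) hp
    (hflat i (mem_range.1 hi).le) (hflat (i + 1) (mem_range.1 hi))).trans ?_
  simp only [sum_add_distrib, ← mul_sum, ← Summable.tsum_finsetSum fun _ _ => ENNReal.summable]
  gcongr with n n n
  · exact sum_ite_mem_mem_le_eVar hu (hJ n) _
  · exact sum_ite_mem_not_mem_le_eVar hu (hJ n) (hy n) _
  · exact sum_ite_not_mem_mem_le_eVar hu (hJ n) (hy n) _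

end Flatten

theorem pVar_flatten_bound_general {E : Type*} [PseudoMetricSpace E]
    (p T : ℝ) (hp : 1 ≤ p)
    (c d : ℕ → ℝ)
    (x y : ℝ → E)
    (hy₁ : ∀ t ∈ Icc 0 T, (∀ n, t ∉ Ioo (c n) (d n)) → y t = x t)
    (hy₂ : ∀ n, ∀ t ∈ Ioo (c n) (d n), y t = x (c n)) :
    eVar p x 0 T ≤
      ((1 + (2 : ℝ≥0∞) ^ p + (3 : ℝ≥0∞) ^ (p - 1)) + (3 : ℝ≥0∞) ^ (p - 1)) *
          ∑' n, eVar p x (c n) (d n) +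
        (1 + (2 : ℝ≥0∞) ^ p + (3 : ℝ≥0∞) ^ (p - 1)) * eVar p y 0 T := by
  set K := ∑' n, eVar p x (c n) (d n)
  set V := eVar p y 0 T
  have hpartition : eVar p x 0 T ≤ K + 3 ^ (p - 1) * (K + K + V) := by
    refine eVar_le fun N u hu h0 hN => ?_
    have hmem : ∀ i ≤ N, u i ∈ Icc 0 T := fun i hi => ⟨h0 ▸ hu i.zero_le, hN ▸ hu hi⟩
    refine (sum_edist_rpow_le_flatten hp (fun n => Ioo_subset_Icc_self) hy₂ hu
      fun i hi => hy₁ _ (hmem i hi)).trans ?_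
    gcongr
    exact sum_le_eVar hu h0 hN
  calc eVar p x 0 T ≤ K + 3 ^ (p - 1) * (K + K + V) := hpartition
    _ = (1 + 3 ^ (p - 1) + 3 ^ (p - 1)) * K + 3 ^ (p - 1) * V := by ring
    _ ≤ _ := by
        gcongr
        · exact le_self_add
        · exact le_add_self

/-- Flattening a path on a countable disjoint union of open intervals:
with `C = 1 + 2^p + 3^(p-1)`,
`‖x‖ₚᵥₐᵣ^p ≤ (C + 3^(p-1)) ∑ₙ ‖x‖_{p-var;[cₙ,dₙ]}^p + C ‖y‖ₚᵥₐᵣ^p`. -/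
theorem pVar_flatten_bound {E : Type*} [PseudoMetricSpace E]
    (p T : ℝ) (hp : 1 ≤ p) (hT : 0 < T)
    (c d : ℕ → ℝ) (hcd : ∀ n, c n < d n)
    (hsub : ∀ n, Icc (c n) (d n) ⊆ Icc 0 T)
    (hdisj : Pairwise fun m n => Disjoint (Ioo (c m) (d m)) (Ioo (c n) (d n)))
    (x y : ℝ → E)
    (hy₁ : ∀ t ∈ Icc 0 T, (∀ n, t ∉ Ioo (c n) (d n)) → y t = x t)
    (hy₂ : ∀ n, ∀ t ∈ Ioo (c n) (d n), y t = x (c n)) :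
    eVar p x 0 T ≤
      ((1 + (2 : ℝ≥0∞) ^ p + (3 : ℝ≥0∞) ^ (p - 1)) + (3 : ℝ≥0∞) ^ (p - 1)) *
          ∑' n, eVar p x (c n) (d n) +
        (1 + (2 : ℝ≥0∞) ^ p + (3 : ℝ≥0∞) ^ (p - 1)) * eVar p y 0 T :=
  pVar_flatten_bound_general p T hp c d x y hy₁ hy₂
end

section
/- Let $(E,d)$ be a metric space and $\mathbf x : [0,T] \to E$ a function. For $\delta > 0$, define $\nu_\delta(\mathbf x)$ as the supremum of integers $k \geq 0$ such that there exist times $t_1 < t_2 \leq t_3 < t_4 \leq \dots \leq t_{2k-1} < t_{2k}$ in $[0,T]$ with $d(\mathbf x_{t_{2i-1}}, \mathbf x_{t_{2i}}) > \delta$ for all $i \leq k$, and let $M(\mathbf x) = \sup_{s,t\in[0,T]} d(\mathbf x_s,\mathbf x_t)$. Then for every $p \geq 1$: $\|\mathbf x\|_{p\text{-var};[0,T]}^p \leq \sum_{r=1}^\infty 2^{-rp + p} \nu_{2^{-r}}(\mathbf x) + M(\mathbf x)^p \, \nu_1(\mathbf x)$. -/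
open Set
open scoped ENNReal

/-- `oscCount δ T x ∈ [0,∞]`: the supremum of the number `k` of oscillations of `x` of size
exceeding `δ` over times `t₁ ≤ t₂ ≤ t₃ ≤ ⋯ ≤ t₂ₖ` in `[0,T]` with
`d(x t₍₂ᵢ₋₁₎, x t₍₂ᵢ₎) > δ`. -/
noncomputable def oscCount {E : Type*} [PseudoMetricSpace E] (δ T : ℝ) (x : ℝ → E) :
    ℝ≥0∞ :=
  ⨆ (k : ℕ) (_ : ∃ t : ℕ → ℝ, Monotone t ∧ (∀ i < 2 * k, t i ∈ Icc 0 T) ∧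
      ∀ i < k, δ < dist (x (t (2 * i))) (x (t (2 * i + 1)))), (k : ℝ≥0∞)

/-! Split the increments of a partition dyadically. An increment `d ∈ (2^{-r-1}, 2^{-r}]`
contributes `d^p ≤ 2^{-rp}`, and an increment above `1` contributes at most `M^p`. The increments
of one partition exceeding `δ` are disjoint oscillations of size `> δ`, so there are at most
`ν_δ` of them. -/

open Finset

lemma ofReal_rpow_le_dyadic {p d : ℝ} {M : ℝ≥0∞} (hp : 0 < p) (hdM : ENNReal.ofReal d ≤ M) :
    ENNReal.ofReal d ^ p ≤
      (∑' r : ℕ, if (2 : ℝ) ^ (-((r : ℝ) + 1)) < d then (2 : ℝ≥0∞) ^ (-((r : ℝ) + 1) * p + p)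
        else 0) + if 1 < d then M ^ p else 0 := by
  rcases le_or_gt d 0 with hd0 | hd0
  · simp [ENNReal.ofReal_of_nonpos hd0, ENNReal.zero_rpow_of_pos hp]
  rcases le_or_gt d 1 with hd1 | hd1
  · have half_pow (m : ℕ) : (1 / 2 : ℝ) ^ m = 2 ^ (-(m : ℝ)) := by
      rw [Real.rpow_neg zero_le_two, Real.rpow_natCast, one_div, inv_pow]
    obtain ⟨r, hlo, hhi⟩ := exists_nat_pow_near_of_lt_one hd0 hd1 one_half_pos one_half_lt_one
    rw [half_pow, Nat.cast_succ] at hlo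
    rw [half_pow] at hhi
    refine le_add_right (le_trans ?_ (ENNReal.le_tsum r))
    rw [if_pos hlo]
    calc ENNReal.ofReal d ^ p ≤ ENNReal.ofReal ((2 : ℝ) ^ (-(r : ℝ))) ^ p := by gcongr
      _ = (2 : ℝ≥0∞) ^ (-((r : ℝ) + 1) * p + p) := by
        rw [← ENNReal.ofReal_rpow_of_pos two_pos, ENNReal.ofReal_ofNat, ← ENNReal.rpow_mul]
        ring_nf
  · refine le_add_left ?_
    rw [if_pos hd1]
    gcongr

lemma sum_ofReal_rpow_le_dyadic {ι : Type*} (s : Finset ι) {d : ι → ℝ} {p : ℝ} {M : ℝ≥0∞}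
    (hp : 0 < p) (hdM : ∀ i ∈ s, ENNReal.ofReal (d i) ≤ M) :
    ∑ i ∈ s, ENNReal.ofReal (d i) ^ p ≤
      (∑' r : ℕ, (2 : ℝ≥0∞) ^ (-((r : ℝ) + 1) * p + p) *
          #{i ∈ s | (2 : ℝ) ^ (-((r : ℝ) + 1)) < d i}) + M ^ p * #{i ∈ s | 1 < d i} := by
  calc ∑ i ∈ s, ENNReal.ofReal (d i) ^ p
      ≤ ∑ i ∈ s, ((∑' r : ℕ, if (2 : ℝ) ^ (-((r : ℝ) + 1)) < d i then
          (2 : ℝ≥0∞) ^ (-((r : ℝ) + 1) * p + p) else 0) + if 1 < d i then M ^ p else 0) :=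
        sum_le_sum fun i hi => ofReal_rpow_le_dyadic hp (hdM i hi)
    _ = _ := by
        rw [sum_add_distrib, ← Summable.tsum_finsetSum fun _ _ => ENNReal.summable]
        simp only [card_filter, Nat.cast_sum, Nat.cast_ite, Nat.cast_one, Nat.cast_zero, mul_sum,
          mul_ite, mul_one, mul_zero]

/-- The indices `e 0, e 0 + 1, e 1, e 1 + 1, …, e (k - 1) + 1`, followed by `n` forever. -/
def succPairs {k : ℕ} (e : Fin k → ℕ) (n j : ℕ) : ℕ :=
  if h : j / 2 < k then e ⟨j / 2, h⟩ + j % 2 else n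

section succPairs

variable {k n : ℕ} {e : Fin k → ℕ}

lemma succPairs_le (hen : ∀ a, e a < n) (j : ℕ) : succPairs e n j ≤ n := by
  unfold succPairs
  split_ifs with h
  · have := hen ⟨j / 2, h⟩
    omega
  · exact le_rfl

lemma succPairs_monotone (he : StrictMono e) (hen : ∀ a, e a < n) : Monotone (succPairs e n) := by
  intro j j' hjj'
  by_cases h' : j' / 2 < k
  · have h : j / 2 < k := (Nat.div_le_div_right hjj').trans_lt h'
    simp only [succPairs, dif_pos h, dif_pos h']
    rcases (Nat.div_le_div_right hjj' : j / 2 ≤ j' / 2).eq_or_lt with heq | hlt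
    · rw [show (⟨j / 2, h⟩ : Fin k) = ⟨j' / 2, h'⟩ from Fin.ext heq]
      omega
    · have := he (show (⟨j / 2, h⟩ : Fin k) < ⟨j' / 2, h'⟩ from hlt)
      omega
  · simpa only [succPairs, dif_neg h'] using succPairs_le hen j

lemma succPairs_two_mul {i : ℕ} (hi : i < k) : succPairs e n (2 * i) = e ⟨i, hi⟩ := by
  simp [succPairs, hi]

lemma succPairs_two_mul_add_one {i : ℕ} (hi : i < k) :
    succPairs e n (2 * i + 1) = e ⟨i, hi⟩ + 1 := by
  have : (2 * i + 1) / 2 = i := by omega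
  simp [succPairs, this, hi]

end succPairs

lemma card_le_oscCount {E : Type*} [PseudoMetricSpace E] {δ T : ℝ} {x : ℝ → E} {u : ℕ → ℝ}
    {n : ℕ} (hu : Monotone u) (hmem : ∀ i ≤ n, u i ∈ Icc 0 T) :
    (#{i ∈ range n | δ < dist (x (u i)) (x (u (i + 1)))} : ℝ≥0∞) ≤ oscCount δ T x := by
  set S := {i ∈ range n | δ < dist (x (u i)) (x (u (i + 1)))}
  set e := S.orderEmbOfFin rfl
  have he (a : Fin #S) : e a < n ∧ δ < dist (x (u (e a))) (x (u (e a + 1))) := by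
    obtain ⟨hlt, hδ⟩ := mem_filter.1 (S.orderEmbOfFin_mem rfl a)
    exact ⟨mem_range.1 hlt, hδ⟩
  refine le_iSup₂_of_le #S
    ⟨u ∘ succPairs e n, hu.comp (succPairs_monotone e.strictMono fun a => (he a).1),
      fun j _ => hmem _ (succPairs_le (fun a => (he a).1) j), fun i hi => ?_⟩ le_rfl
  simpa only [Function.comp_apply, succPairs_two_mul hi, succPairs_two_mul_add_one hi]
    using (he ⟨i, hi⟩).2

theorem pVar_le_oscCount_sum_general {E : Type*} [PseudoMetricSpace E]
    (p T : ℝ) (hp : 1 ≤ p) (x : ℝ → E) :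
    eVar p x 0 T ≤
      (∑' r : ℕ, (2 : ℝ≥0∞) ^ (-((r : ℝ) + 1) * p + p) *
          oscCount ((2 : ℝ) ^ (-((r : ℝ) + 1))) T x) +
        (⨆ s ∈ Icc (0 : ℝ) T, ⨆ t ∈ Icc (0 : ℝ) T, edist (x s) (x t)) ^ p *
          oscCount 1 T x := by
  refine iSup_le fun n => iSup_le fun u => iSup_le fun hu => iSup_le fun h0 =>
    iSup_le fun hn => ?_
  have hmem (i : ℕ) (hi : i ≤ n) : u i ∈ Icc 0 T := ⟨h0 ▸ hu i.zero_le, hn ▸ hu hi⟩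
  set M := ⨆ s ∈ Icc (0 : ℝ) T, ⨆ t ∈ Icc (0 : ℝ) T, edist (x s) (x t)
  have hM (i : ℕ) (hi : i ∈ range n) : ENNReal.ofReal (dist (x (u i)) (x (u (i + 1)))) ≤ M := by
    have hi : i < n := mem_range.1 hi
    rw [← edist_dist]
    exact le_iSup₂_of_le (u i) (hmem i hi.le)
      (le_iSup₂_of_le (u (i + 1)) (hmem (i + 1) hi) le_rfl)
  calc ∑ i ∈ range n, edist (x (u i)) (x (u (i + 1))) ^ p
      = ∑ i ∈ range n, ENNReal.ofReal (dist (x (u i)) (x (u (i + 1)))) ^ p := by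
        simp only [edist_dist]
    _ ≤ _ := sum_ofReal_rpow_le_dyadic _ (zero_lt_one.trans_le hp) hM
    _ ≤ _ := by
        gcongr <;> exact card_le_oscCount hu hmem

/-- The `p`-variation of any function is controlled by the oscillation
counts: `‖x‖ₚᵥₐᵣ^p ≤ ∑_{r≥1} 2^{-rp+p} ν_{2^{-r}}(x) + M(x)^p ν₁(x)`,
where `M(x) = sup_{s,t} d(x_s, x_t)`. -/
theorem pVar_le_oscCount_sum {E : Type*} [PseudoMetricSpace E]
    (p T : ℝ) (hp : 1 ≤ p) (hT : 0 < T) (x : ℝ → E) :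
    eVar p x 0 T ≤
      (∑' r : ℕ, (2 : ℝ≥0∞) ^ (-((r : ℝ) + 1) * p + p) *
          oscCount ((2 : ℝ) ^ (-((r : ℝ) + 1))) T x) +
        (⨆ s ∈ Icc (0 : ℝ) T, ⨆ t ∈ Icc (0 : ℝ) T, edist (x s) (x t)) ^ p *
          oscCount 1 T x :=
  pVar_le_oscCount_sum_general p T hp x
end

section
/- Let $Z$ be a random variable with negative binomial distribution counting both successes and failures with parameters $(r, 1-q)$, $q \in (0,1)$: i.e. $Z$ is the total number of Bernoulli$(1-q)$ trials needed to obtain $r$ successes. Let $(\tau_i)_{i\geq 0}$ be an increasing sequence of $[0,\infty]$-valued random variables with $\tau_0 = 0$, such that almost surely for all $i \geq 0$, $\mathbb P(\tau_{i+1} - \tau_i \leq h \mid \tau_i, \dots, \tau_0) \leq q$ (with convention $\infty - \infty = \infty$). Let $N := \sup\{j \geq 0 : \tau_j \leq T\}$. Then $\mathbb E[N] \leq \lceil T/h \rceil \cdot \frac{1}{1-q}$. -/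
/-!
Split the indices `i` with `τᵢ₊₁ ≤ T` according to whether the gap `τᵢ₊₁ - τᵢ` is `≤ h`.
A short gap after a time `τᵢ ≤ T` has conditional probability at most `q` given the past,
and a monotone sequence can make fewer than `⌈T/h⌉` gaps longer than `h` before reaching `T`.
So `Sₙ = ∑_{i<n} ℙ(τᵢ₊₁ ≤ T)` satisfies `Sₙ ≤ q (1 + Sₙ) + ⌈T/h⌉ - 1`, hence `Sₙ ≤ ⌈T/h⌉/(1-q)`,
and by monotonicity `𝔼[N] ≤ supₙ Sₙ`.
-/

open MeasureTheory Set
open scoped ENNReal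

theorem measure_inter_le_of_condExp_indicator_le {Ω : Type*} {m m₀ : MeasurableSpace Ω}
    {μ : Measure Ω} [IsFiniteMeasure μ] (hm : m ≤ m₀) {G S : Set Ω}
    (hG : MeasurableSet[m₀] G) (hS : MeasurableSet[m] S) {q : ℝ} (hq : 0 ≤ q)
    (hcond : ∀ᵐ ω ∂μ, μ[G.indicator (fun _ => (1 : ℝ)) | m] ω ≤ q) :
    μ (S ∩ G) ≤ ENNReal.ofReal q * μ S := by
  have hreal : μ.real (S ∩ G) ≤ q * μ.real S :=
    calc μ.real (S ∩ G) = ∫ ω in S, G.indicator (fun _ => (1 : ℝ)) ω ∂μ := by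
          rw [← Pi.one_def, integral_indicator_one hG, measureReal_restrict_apply hG, inter_comm]
      _ = ∫ ω in S, μ[G.indicator (fun _ => (1 : ℝ)) | m] ω ∂μ :=
          (setIntegral_condExp hm ((integrable_const 1).indicator hG) hS).symm
      _ ≤ ∫ _ in S, q ∂μ :=
          setIntegral_mono_ae integrable_condExp.integrableOn integrableOn_const hcond
      _ = q * μ.real S := by rw [setIntegral_const, smul_eq_mul, mul_comm]
  calc μ (S ∩ G) = ENNReal.ofReal (μ.real (S ∩ G)) := (ofReal_measureReal).symm
    _ ≤ ENNReal.ofReal (q * μ.real S) := ENNReal.ofReal_le_ofReal hreal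
    _ = ENNReal.ofReal q * μ S := by rw [ENNReal.ofReal_mul hq, ofReal_measureReal]

noncomputable def largeGapsBelow (t : ℕ → ℝ≥0∞) (c d : ℝ≥0∞) (n : ℕ) : Finset ℕ :=
  (Finset.range n).filter fun i => t (i + 1) ≤ c ∧ t i + d < t (i + 1)

-- The first conjunct is the induction invariant; the strict second one gives `< ⌈T/h⌉` below.
theorem card_largeGapsBelow_mul_le {t : ℕ → ℝ≥0∞} (ht : Monotone t) (c d : ℝ≥0∞) (n : ℕ) :
    (largeGapsBelow t c d n).card * d ≤ t n ∧
      ((largeGapsBelow t c d n).card ≠ 0 → (largeGapsBelow t c d n).card * d < c) := by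
  induction n with
  | zero => simp [largeGapsBelow]
  | succ n ih =>
    by_cases hn : t (n + 1) ≤ c ∧ t n + d < t (n + 1)
    · have hcard : (largeGapsBelow t c d (n + 1)).card = (largeGapsBelow t c d n).card + 1 := by
        rw [largeGapsBelow, Finset.range_add_one, Finset.filter_insert, if_pos hn,
          Finset.card_insert_of_notMem (by simp)]
        rfl
      have hlt : ((largeGapsBelow t c d n).card + 1 : ℝ≥0∞) * d < t (n + 1) :=
        calc ((largeGapsBelow t c d n).card + 1 : ℝ≥0∞) * d
            = (largeGapsBelow t c d n).card * d + d := by ring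
          _ ≤ t n + d := by gcongr; exact ih.1
          _ < t (n + 1) := hn.2
      rw [hcard]
      push_cast
      exact ⟨hlt.le, fun _ => hlt.trans_le hn.1⟩
    · have hcard : largeGapsBelow t c d (n + 1) = largeGapsBelow t c d n := by
        rw [largeGapsBelow, Finset.range_add_one, Finset.filter_insert, if_neg hn]
        rfl
      rw [hcard]
      exact ⟨ih.1.trans (ht n.le_succ), ih.2⟩

theorem card_largeGapsBelow_lt_ceil {t : ℕ → ℝ≥0∞} (ht : Monotone t) {T h : ℝ}
    (hT : 0 < T) (hh : 0 < h) (n : ℕ) :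
    (largeGapsBelow t (ENNReal.ofReal T) (ENNReal.ofReal h) n).card < ⌈T / h⌉₊ := by
  set k := (largeGapsBelow t (ENNReal.ofReal T) (ENNReal.ofReal h) n).card
  rcases Nat.eq_zero_or_pos k with hk | hk
  · rw [hk]
    exact Nat.ceil_pos.mpr (div_pos hT hh)
  have hkT := (card_largeGapsBelow_mul_le ht _ _ n).2 hk.ne'
  rw [← ENNReal.ofReal_natCast, ← ENNReal.ofReal_mul (Nat.cast_nonneg k),
    ENNReal.ofReal_lt_ofReal_iff hT] at hkT
  exact Nat.lt_ceil.mpr ((lt_div_iff₀ hh).mpr hkT)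

theorem le_ofReal_of_le_mul_one_add {s : ℝ≥0∞} {q : ℝ} {r : ℕ} (hs : s ≠ ⊤) (hq0 : 0 ≤ q)
    (hq1 : q < 1) (hr : 1 ≤ r) (h : s ≤ ENNReal.ofReal q * (1 + s) + ((r - 1 : ℕ) : ℝ≥0∞)) :
    s ≤ ENNReal.ofReal (r * (1 / (1 - q))) := by
  have hreal : s.toReal ≤ q * (1 + s.toReal) + (r - 1) := by
    have := ENNReal.toReal_mono (by finiteness) h
    rwa [ENNReal.toReal_add (by finiteness) (by simp), ENNReal.toReal_mul,
      ENNReal.toReal_add (by simp) hs, ENNReal.toReal_ofReal hq0, ENNReal.toReal_natCast,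
      Nat.cast_sub hr, ENNReal.toReal_one, Nat.cast_one] at this
  rw [← ENNReal.ofReal_toReal hs]
  refine ENNReal.ofReal_le_ofReal ?_
  rw [mul_one_div, le_div_iff₀ (by linarith)]
  nlinarith

section RandomTimes

variable {Ω : Type*}

def shortGap (τ : ℕ → Ω → ℝ≥0∞) (h : ℝ) (i : ℕ) : Set Ω :=
  {ω | τ (i + 1) ω ≠ ⊤ ∧ τ (i + 1) ω ≤ τ i ω + ENNReal.ofReal h}

abbrev pastSigma (τ : ℕ → Ω → ℝ≥0∞) (i : ℕ) : MeasurableSpace Ω :=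
  ⨆ k ∈ Finset.range (i + 1), MeasurableSpace.comap (τ k) inferInstance

variable {τ : ℕ → Ω → ℝ≥0∞}

theorem measurable_pastSigma (i : ℕ) : Measurable[pastSigma τ i] (τ i) :=
  Measurable.of_comap_le <| le_iSup₂
    (f := fun k (_ : k ∈ Finset.range (i + 1)) => MeasurableSpace.comap (τ k) inferInstance)
    i (Finset.self_mem_range_succ i)

theorem mem_diff_shortGap_iff {h : ℝ} {i : ℕ} {c : ℝ≥0∞} (hc : c ≠ ⊤) {ω : Ω} :
    ω ∈ {ω | τ (i + 1) ω ≤ c} \ shortGap τ h i ↔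
      τ (i + 1) ω ≤ c ∧ τ i ω + ENNReal.ofReal h < τ (i + 1) ω := by
  simp only [shortGap, mem_sdiff, mem_ofPred_eq, not_and, not_le]
  exact and_congr_right fun hle => ⟨fun hgap => hgap (ne_top_of_le_ne_top hc hle),
    fun hgap _ => hgap⟩

variable [MeasurableSpace Ω]

theorem pastSigma_le (hτ : ∀ i, Measurable (τ i)) (i : ℕ) :
    pastSigma τ i ≤ ‹MeasurableSpace Ω› :=
  iSup₂_le fun k _ => (hτ k).comap_le

theorem measurableSet_shortGap (hτ : ∀ i, Measurable (τ i)) (h : ℝ) (i : ℕ) :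
    MeasurableSet (shortGap τ h i) :=
  ((hτ (i + 1)) (measurableSet_singleton ⊤).compl).inter
    (measurableSet_le (hτ (i + 1)) ((hτ i).add_const _))

theorem lintegral_iSup_le_tsum_measure (μ : Measure Ω) (hτ : ∀ i, Measurable (τ i))
    (hmono : ∀ᵐ ω ∂μ, Monotone fun i => τ i ω) (c : ℝ≥0∞) :
    ∫⁻ ω, (⨆ (j : ℕ) (_ : τ j ω ≤ c), (j : ℝ≥0∞)) ∂μ ≤ ∑' i, μ {ω | τ (i + 1) ω ≤ c} := by
  have hmeas (i : ℕ) : MeasurableSet {ω | τ (i + 1) ω ≤ c} := hτ (i + 1) measurableSet_Iic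
  calc ∫⁻ ω, (⨆ (j : ℕ) (_ : τ j ω ≤ c), (j : ℝ≥0∞)) ∂μ
      ≤ ∫⁻ ω, ∑' i, {ω | τ (i + 1) ω ≤ c}.indicator 1 ω ∂μ := by
        refine lintegral_mono_ae (hmono.mono fun ω hω => iSup₂_le fun j hj => ?_)
        calc (j : ℝ≥0∞) = ∑ _ ∈ Finset.range j, 1 := by simp
          _ = ∑ i ∈ Finset.range j, {ω | τ (i + 1) ω ≤ c}.indicator 1 ω :=
              Finset.sum_congr rfl fun i hi => (indicator_of_mem
                (show τ (i + 1) ω ≤ c from (hω (Finset.mem_range.mp hi)).trans hj) 1).symm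
          _ ≤ _ := ENNReal.sum_le_tsum _
    _ = ∑' i, μ {ω | τ (i + 1) ω ≤ c} := by
        rw [lintegral_tsum fun i => (measurable_one.indicator (hmeas i)).aemeasurable]
        exact tsum_congr fun i => lintegral_indicator_one (hmeas i)

theorem measure_succ_le_mul_add (μ : Measure Ω) [IsFiniteMeasure μ]
    (hτ : ∀ i, Measurable (τ i)) (hmono : ∀ᵐ ω ∂μ, Monotone fun i => τ i ω)
    {h q : ℝ} (hq : 0 ≤ q) (c : ℝ≥0∞) (i : ℕ)
    (hcond : ∀ᵐ ω ∂μ, μ[(shortGap τ h i).indicator (fun _ => (1 : ℝ)) | pastSigma τ i] ω ≤ q) :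
    μ {ω | τ (i + 1) ω ≤ c} ≤
      ENNReal.ofReal q * μ {ω | τ i ω ≤ c} + μ ({ω | τ (i + 1) ω ≤ c} \ shortGap τ h i) := by
  have hsplit : {ω | τ (i + 1) ω ≤ c} ≤ᵐ[μ]
      ({ω | τ i ω ≤ c} ∩ shortGap τ h i ∪ {ω | τ (i + 1) ω ≤ c} \ shortGap τ h i : Set Ω) := by
    filter_upwards [hmono] with ω hω hle
    by_cases hgap : ω ∈ shortGap τ h i
    · exact Or.inl ⟨(hω i.le_succ).trans hle, hgap⟩
    · exact Or.inr ⟨hle, hgap⟩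
  calc μ {ω | τ (i + 1) ω ≤ c}
      ≤ μ ({ω | τ i ω ≤ c} ∩ shortGap τ h i) + μ ({ω | τ (i + 1) ω ≤ c} \ shortGap τ h i) :=
        (measure_mono_ae hsplit).trans (measure_union_le _ _)
    _ ≤ _ := by
        gcongr
        exact measure_inter_le_of_condExp_indicator_le (pastSigma_le hτ i)
          (measurableSet_shortGap hτ h i) (measurable_pastSigma i measurableSet_Iic) hq hcond

theorem sum_measure_diff_shortGap_le (μ : Measure Ω) [IsProbabilityMeasure μ]
    (hτ : ∀ i, Measurable (τ i)) (hmono : ∀ᵐ ω ∂μ, Monotone fun i => τ i ω)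
    {T h : ℝ} (hT : 0 < T) (hh : 0 < h) (n : ℕ) :
    ∑ i ∈ Finset.range n, μ ({ω | τ (i + 1) ω ≤ ENNReal.ofReal T} \ shortGap τ h i) ≤
      ((⌈T / h⌉₊ - 1 : ℕ) : ℝ≥0∞) := by
  set E : ℕ → Set Ω := fun i => {ω | τ (i + 1) ω ≤ ENNReal.ofReal T} \ shortGap τ h i
  have hE (i : ℕ) : MeasurableSet (E i) :=
    (hτ (i + 1) measurableSet_Iic).diff (measurableSet_shortGap hτ h i)
  have hcount : ∀ᵐ ω ∂μ, ∑ i ∈ Finset.range n, (E i).indicator 1 ω ≤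
      ((⌈T / h⌉₊ - 1 : ℕ) : ℝ≥0∞) := by
    filter_upwards [hmono] with ω hω
    classical
    have hfilter : (Finset.range n).filter (fun i => ω ∈ E i) =
        largeGapsBelow (τ · ω) (ENNReal.ofReal T) (ENNReal.ofReal h) n :=
      Finset.filter_congr fun i _ => mem_diff_shortGap_iff ENNReal.ofReal_ne_top
    have hlt := card_largeGapsBelow_lt_ceil hω hT hh n
    simp only [indicator_apply, Pi.one_apply]
    rw [← Finset.natCast_card_filter, hfilter]
    exact_mod_cast Nat.le_sub_one_of_lt hlt
  calc ∑ i ∈ Finset.range n, μ (E i)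
      = ∫⁻ ω, ∑ i ∈ Finset.range n, (E i).indicator 1 ω ∂μ := by
        rw [lintegral_finsetSum _ fun i _ => measurable_one.indicator (hE i)]
        exact Finset.sum_congr rfl fun i _ => (lintegral_indicator_one (hE i)).symm
    _ ≤ ∫⁻ _, ((⌈T / h⌉₊ - 1 : ℕ) : ℝ≥0∞) ∂μ := lintegral_mono_ae hcount
    _ = ((⌈T / h⌉₊ - 1 : ℕ) : ℝ≥0∞) := by simp

theorem sum_measure_le_mul_one_add (μ : Measure Ω) [IsProbabilityMeasure μ]
    (hτ : ∀ i, Measurable (τ i)) (hmono : ∀ᵐ ω ∂μ, Monotone fun i => τ i ω)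
    {T h q : ℝ} (hT : 0 < T) (hh : 0 < h) (hq : 0 ≤ q)
    (hcond : ∀ i, ∀ᵐ ω ∂μ,
      μ[(shortGap τ h i).indicator (fun _ => (1 : ℝ)) | pastSigma τ i] ω ≤ q) (n : ℕ) :
    ∑ i ∈ Finset.range n, μ {ω | τ (i + 1) ω ≤ ENNReal.ofReal T} ≤
      ENNReal.ofReal q * (1 + ∑ i ∈ Finset.range n, μ {ω | τ (i + 1) ω ≤ ENNReal.ofReal T}) +
        ((⌈T / h⌉₊ - 1 : ℕ) : ℝ≥0∞) := by
  set p : ℕ → ℝ≥0∞ := fun i => μ {ω | τ i ω ≤ ENNReal.ofReal T}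
  have hshift : ∑ i ∈ Finset.range n, p i ≤ 1 + ∑ i ∈ Finset.range n, p (i + 1) :=
    calc ∑ i ∈ Finset.range n, p i
        ≤ ∑ i ∈ Finset.range (n + 1), p i := Finset.sum_le_sum_of_subset (by simp)
      _ = ∑ i ∈ Finset.range n, p (i + 1) + p 0 := Finset.sum_range_succ' _ _
      _ ≤ 1 + ∑ i ∈ Finset.range n, p (i + 1) := by rw [add_comm]; gcongr; exact prob_le_one
  calc ∑ i ∈ Finset.range n, p (i + 1)
      ≤ ∑ i ∈ Finset.range n, (ENNReal.ofReal q * p i +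
          μ ({ω | τ (i + 1) ω ≤ ENNReal.ofReal T} \ shortGap τ h i)) :=
        Finset.sum_le_sum fun i _ => measure_succ_le_mul_add μ hτ hmono hq _ i (hcond i)
    _ = ENNReal.ofReal q * ∑ i ∈ Finset.range n, p i +
          ∑ i ∈ Finset.range n, μ ({ω | τ (i + 1) ω ≤ ENNReal.ofReal T} \ shortGap τ h i) := by
        rw [Finset.sum_add_distrib, Finset.mul_sum]
    _ ≤ _ := by
        gcongr
        exact sum_measure_diff_shortGap_le μ hτ hmono hT hh n

end RandomTimes

theorem expected_count_le_negBinomial_general {Ω : Type*} [MeasurableSpace Ω]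
    (μ : Measure Ω) [IsProbabilityMeasure μ]
    (τ : ℕ → Ω → ℝ≥0∞) (hτmeas : ∀ i, Measurable (τ i))
    (hτmono : ∀ᵐ ω ∂μ, Monotone fun i => τ i ω)
    (T h q : ℝ) (hT : 0 < T) (hh : 0 < h) (hq : q ∈ Ioo (0 : ℝ) 1)
    (hcond : ∀ i : ℕ, ∀ᵐ ω ∂μ,
      (μ[Set.indicator
          {ω' | τ (i + 1) ω' ≠ ⊤ ∧ τ (i + 1) ω' ≤ τ i ω' + ENNReal.ofReal h}
          (fun _ => (1 : ℝ)) |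
        ⨆ k ∈ Finset.range (i + 1), MeasurableSpace.comap (τ k) inferInstance]) ω ≤ q) :
    ∫⁻ ω, (⨆ (j : ℕ) (_ : τ j ω ≤ ENNReal.ofReal T), (j : ℝ≥0∞)) ∂μ ≤
      ENNReal.ofReal ((⌈T / h⌉₊ : ℝ) * (1 / (1 - q))) := by
  have hpartial (n : ℕ) : ∑ i ∈ Finset.range n, μ {ω | τ (i + 1) ω ≤ ENNReal.ofReal T} ≤
      ENNReal.ofReal ((⌈T / h⌉₊ : ℝ) * (1 / (1 - q))) :=
    le_ofReal_of_le_mul_one_add (ENNReal.sum_ne_top.mpr fun _ _ => measure_ne_top _ _)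
      hq.1.le hq.2 (Nat.ceil_pos.mpr (div_pos hT hh))
      (sum_measure_le_mul_one_add μ hτmeas hτmono hT hh hq.1.le hcond n)
  calc ∫⁻ ω, (⨆ (j : ℕ) (_ : τ j ω ≤ ENNReal.ofReal T), (j : ℝ≥0∞)) ∂μ
      ≤ ∑' i, μ {ω | τ (i + 1) ω ≤ ENNReal.ofReal T} :=
        lintegral_iSup_le_tsum_measure μ hτmeas hτmono _
    _ ≤ _ := by
        rw [ENNReal.tsum_eq_iSup_nat]
        exact iSup_le hpartial

/-- Let `(τᵢ)` be an increasing sequence of `[0,∞]`-valued random times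
with `τ₀ = 0` such that, conditionally on `τ₀, …, τᵢ`, the gap `τᵢ₊₁ - τᵢ` is `≤ h` with
probability at most `q` (with the convention `∞ - ∞ = ∞`, i.e. the event requires
`τᵢ₊₁ < ∞`).  Then the number `N` of indices `j` with `τⱼ ≤ T` satisfies
`𝔼[N] ≤ ⌈T/h⌉ / (1 - q)`. -/
theorem expected_count_le_negBinomial {Ω : Type*} [MeasurableSpace Ω]
    (μ : Measure Ω) [IsProbabilityMeasure μ]
    (τ : ℕ → Ω → ℝ≥0∞) (hτmeas : ∀ i, Measurable (τ i))
    (hτ0 : ∀ᵐ ω ∂μ, τ 0 ω = 0)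
    (hτmono : ∀ᵐ ω ∂μ, Monotone fun i => τ i ω)
    (T h q : ℝ) (hT : 0 < T) (hh : 0 < h) (hq : q ∈ Ioo (0 : ℝ) 1)
    (hcond : ∀ i : ℕ, ∀ᵐ ω ∂μ,
      (μ[Set.indicator
          {ω' | τ (i + 1) ω' ≠ ⊤ ∧ τ (i + 1) ω' ≤ τ i ω' + ENNReal.ofReal h}
          (fun _ => (1 : ℝ)) |
        ⨆ k ∈ Finset.range (i + 1), MeasurableSpace.comap (τ k) inferInstance]) ω ≤ q) :
    ∫⁻ ω, (⨆ (j : ℕ) (_ : τ j ω ≤ ENNReal.ofReal T), (j : ℝ≥0∞)) ∂μ ≤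
      ENNReal.ofReal ((⌈T / h⌉₊ : ℝ) * (1 / (1 - q))) :=
  expected_count_le_negBinomial_general μ τ hτmeas hτmono T h q hT hh hq hcond
end

section
/- Let $\mathbf X$ be a L\'evy process in $\mathbb R$ (or in a Lie group $G$, via a coordinate $\xi_i$) started at $0$, with the property that $\limsup_{t \to 0} t^{-1} |\mathbf X_t|^2 = \infty$ almost surely, and with stationary independent increments. Then almost surely $\sup_{\mathcal D \subset [0,1]} \sum_{t_k \in \mathcal D} |\mathbf X_{t_{k+1}} - \mathbf X_{t_k}|^2 = \infty$, i.e. $\mathbf X$ has almost surely infinite $2$-variation on $[0,1]$. -/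
/-!
Stationarity and independence of the increments give the increment process `h ↦ X (s + h) - X s`
after any fixed time `s ≥ 0` the law of `X` itself, so almost surely
`limsup_{h ↓ 0} (X (s + h) - X s)² / h = ∞`. By Fubini, almost surely this holds at Lebesgue-almost
every `s ∈ [0, 1)`. For such a path and a level `K`, the Vitali covering theorem produces disjoint
intervals `[s, q] ⊆ [0, 1]` of total length at least `1 / 2` with squared increments above
`K (q - s)`, and a partition through their endpoints has squared-increment sum at least `K / 2`.
-/

open MeasureTheory ProbabilityTheory Set Filter Topology

def HasPartitionSqSumGE (Y : ℝ → ℝ) (a b S : ℝ) : Prop :=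
  ∃ (n : ℕ) (u : ℕ → ℝ), Monotone u ∧ u 0 = a ∧ u n = b ∧
    S ≤ ∑ i ∈ Finset.range n, (Y (u (i + 1)) - Y (u i)) ^ 2

namespace HasPartitionSqSumGE

variable {Y : ℝ → ℝ} {a b c S T : ℝ}

theorem of_le (hab : a ≤ b) : HasPartitionSqSumGE Y a b ((Y b - Y a) ^ 2) := by
  refine ⟨1, fun i => if i = 0 then a else b, monotone_nat_of_le_succ fun i => ?_, rfl, rfl,
    by simp⟩
  rcases i with _ | i <;> simp [hab]

theorem mono (h : HasPartitionSqSumGE Y a b S) (hTS : T ≤ S) : HasPartitionSqSumGE Y a b T :=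
  let ⟨n, u, hu, hu0, hun, hS⟩ := h
  ⟨n, u, hu, hu0, hun, hTS.trans hS⟩

theorem add (h₁ : HasPartitionSqSumGE Y a b S) (h₂ : HasPartitionSqSumGE Y b c T) :
    HasPartitionSqSumGE Y a c (S + T) := by
  obtain ⟨n, u, hu, hu0, hun, hS⟩ := h₁
  obtain ⟨m, v, hv, hv0, hvm, hT⟩ := h₂
  set w : ℕ → ℝ := fun i => if i ≤ n then u i else v (i - n)
  have hw_right : ∀ k, w (n + k) = v k := by
    intro k
    rcases k with _ | k
    · simp [w, hun, hv0]
    · simp [w]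
  refine ⟨n + m, w, fun i j hij => ?_, by simp [w, hu0], by rw [hw_right, hvm], ?_⟩
  · by_cases hj : j ≤ n
    · simpa [w, hj, hij.trans hj] using hu hij
    by_cases hi : i ≤ n
    · simp only [w, hi, hj, if_true, if_false]
      calc u i ≤ u n := hu hi
        _ = v 0 := hun.trans hv0.symm
        _ ≤ v (j - n) := hv (Nat.zero_le _)
    · simpa [w, hi, hj] using hv (Nat.sub_le_sub_right hij n)
  · rw [Finset.sum_range_add]
    have hw_left : ∀ i ∈ Finset.range n, (Y (w (i + 1)) - Y (w i)) ^ 2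
        = (Y (u (i + 1)) - Y (u i)) ^ 2 := by
      intro i hi
      have hi : i + 1 ≤ n := Finset.mem_range.mp hi
      simp [w, hi, (Nat.le_succ i).trans hi]
    rw [Finset.sum_congr rfl hw_left]
    simp only [add_assoc, hw_right]
    exact add_le_add hS hT

end HasPartitionSqSumGE

theorem hasPartitionSqSumGE_sum {ι : Type*} (Y : ℝ → ℝ) (s : Finset ι) (l r : ι → ℝ)
    (hlr : ∀ i ∈ s, l i ≤ r i) (hs : (s : Set ι).PairwiseDisjoint fun i => Icc (l i) (r i))
    {a b : ℝ} (hab : a ≤ b) (hsub : ∀ i ∈ s, a ≤ l i ∧ r i ≤ b) :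
    HasPartitionSqSumGE Y a b (∑ i ∈ s, (Y (r i) - Y (l i)) ^ 2) := by
  classical
  induction s using Finset.induction_on_max_value r generalizing b with
  | empty => exact (HasPartitionSqSumGE.of_le hab).mono (by simp [sq_nonneg])
  | insert j s hj hmax ih =>
    have hrl : ∀ i ∈ s, r i < l j := by
      intro i hi
      by_contra! hle
      have hij : i ≠ j := fun h => hj (h ▸ hi)
      have hli : max (l i) (l j) ∈ Icc (l i) (r i) :=
        ⟨le_max_left _ _, max_le (hlr i (by simp [hi])) hle⟩
      have hlj : max (l i) (l j) ∈ Icc (l j) (r j) :=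
        ⟨le_max_right _ _, max_le ((hlr i (by simp [hi])).trans (hmax i hi)) (hlr j (by simp))⟩
      exact Set.disjoint_left.mp (hs (by simp [hi]) (by simp) hij) hli hlj
    have hs' : HasPartitionSqSumGE Y a (l j) (∑ i ∈ s, (Y (r i) - Y (l i)) ^ 2) :=
      ih (fun i hi => hlr i (by simp [hi])) (hs.subset (by simp))
        (hsub j (by simp)).1 (fun i hi => ⟨(hsub i (by simp [hi])).1, (hrl i hi).le⟩)
    rw [Finset.sum_insert hj, add_comm, ← add_zero (_ + _)]
    exact (hs'.add (HasPartitionSqSumGE.of_le (hlr j (by simp)))).add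
      ((HasPartitionSqSumGE.of_le (hsub j (by simp)).2).mono (sq_nonneg _))

/-- A rational form of `limsup_{q ↓ s} (Y q - Y s)² / (q - s) = ∞`: the increment starts at a
rational `p` slightly right of `s`, so that `{(ω, s) | SqIncrUnboundedAt (X · ω) s}` is measurable
without joint measurability of `X`. -/
def SqIncrUnboundedAt (Y : ℝ → ℝ) (s : ℝ) : Prop :=
  ∀ K n : ℕ, ∃ p q : ℚ, s < p ∧ p < q ∧ (q : ℝ) < s + 1 / (n + 1) ∧
    K * (q - s) < (Y q - Y p) ^ 2

theorem exists_pairwiseDisjoint_Icc_of_ae_sqIncrUnboundedAt {Y : ℝ → ℝ} {a b : ℝ}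
    (hY : ∀ᵐ s ∂(volume.restrict (Ico a b)), SqIncrUnboundedAt Y s) (K : ℕ) :
    ∃ u : Set (ℝ × ℚ × ℚ), u.PairwiseDisjoint (fun x => Icc x.1 (x.2.2 : ℝ)) ∧
      (∀ x ∈ u, a ≤ x.1 ∧ x.1 < x.2.1 ∧ x.2.1 < x.2.2 ∧ (x.2.2 : ℝ) ≤ b ∧
        K * (x.2.2 - x.1) < (Y x.2.2 - Y x.2.1) ^ 2) ∧
      volume (Ico a b) ≤ ∑' x : u, ENNReal.ofReal (x.1.2.2 - x.1.1) := by
  set t : Set (ℝ × ℚ × ℚ) := {x | a ≤ x.1 ∧ x.1 < x.2.1 ∧ x.2.1 < x.2.2 ∧ (x.2.2 : ℝ) ≤ b ∧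
    K * (x.2.2 - x.1) < (Y x.2.2 - Y x.2.1) ^ 2}
  set G : Set ℝ := {s ∈ Ico a b | SqIncrUnboundedAt Y s}
  have hG : ∀ s ∈ G, ∀ ε > (0 : ℝ), ∃ x ∈ t, (x.2.2 : ℝ) - x.1 ≤ ε ∧ x.1 = s := by
    rintro s ⟨⟨has, hsb⟩, hs⟩ ε hε
    obtain ⟨n, hn⟩ := exists_nat_one_div_lt (lt_min hε (sub_pos.2 hsb))
    obtain ⟨p, q, hsp, hpq, hq, hK⟩ := hs K n
    have hq' : (q : ℝ) < s + min ε (b - s) := by linarith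
    exact ⟨(s, p, q), ⟨has, hsp, by exact_mod_cast hpq,
      by linarith [min_le_right ε (b - s)], hK⟩, by linarith [min_le_left ε (b - s)], rfl⟩
  obtain ⟨u, hut, hu, hdisj, hcover⟩ := Vitali.exists_disjoint_covering_ae volume G t 6
    (fun x => x.2.2 - x.1) Prod.fst (fun x => Icc x.1 (x.2.2 : ℝ))
    (fun x hx => by
      have : x.1 < x.2.2 := hx.2.1.trans (by exact_mod_cast hx.2.2.1)
      rw [Real.closedBall_eq_Icc]
      exact Icc_subset_Icc (by linarith) (by linarith))
    (fun x hx => by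
      rw [Real.volume_closedBall, Real.volume_Icc, ← ENNReal.ofReal_coe_nnreal,
        ← ENNReal.ofReal_mul (by norm_num)]
      exact ENNReal.ofReal_le_ofReal (by push_cast; linarith))
    (fun x hx => by
      rw [interior_Icc, nonempty_Ioo]
      exact hx.2.1.trans (by exact_mod_cast hx.2.2.1))
    (fun x _ => isClosed_Icc) hG
  refine ⟨u, hdisj, fun x hx => hut hx, ?_⟩
  have hGfull : volume (Ico a b \ G) = 0 := by
    rw [ae_restrict_iff' measurableSet_Ico, ae_iff] at hY
    convert hY using 2
    ext s
    simp only [G, Set.mem_sdiff, Set.mem_ofPred_eq, not_and, Classical.not_imp]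
    tauto
  calc volume (Ico a b) ≤ volume G := measure_mono_ae (ae_le_set.2 hGfull)
    _ ≤ volume (⋃ x ∈ u, Icc x.1 (x.2.2 : ℝ)) := measure_mono_ae (ae_le_set.2 hcover)
    _ ≤ ∑' x : u, volume (Icc x.1.1 (x.1.2.2 : ℝ)) := measure_biUnion_le _ hu _
    _ = ∑' x : u, ENNReal.ofReal (x.1.2.2 - x.1.1) := by simp_rw [Real.volume_Icc]

theorem exists_partitionSqSum_gt_of_ae_sqIncrUnboundedAt {Y : ℝ → ℝ} {a b : ℝ} (hab : a < b)
    (hY : ∀ᵐ s ∂(volume.restrict (Ico a b)), SqIncrUnboundedAt Y s) (M : ℝ) :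
    ∃ (n : ℕ) (u : ℕ → ℝ), Monotone u ∧ u 0 = a ∧ u n = b ∧
      M < ∑ i ∈ Finset.range n, (Y (u (i + 1)) - Y (u i)) ^ 2 := by
  obtain ⟨K, hK⟩ := exists_nat_gt (2 * M / (b - a))
  obtain ⟨u, hdisj, hu, hvol⟩ := exists_pairwiseDisjoint_Icc_of_ae_sqIncrUnboundedAt hY K
  have hlen : ENNReal.ofReal ((b - a) / 2) < ∑' x : u, ENNReal.ofReal (x.1.2.2 - x.1.1) := by
    rw [Real.volume_Ico] at hvol
    exact (ENNReal.ofReal_lt_ofReal_iff (by linarith)).2 (by linarith) |>.trans_le hvol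
  rw [ENNReal.tsum_eq_iSup_sum, lt_iSup_iff] at hlen
  obtain ⟨F, hF⟩ := hlen
  have hpos : ∀ x : u, 0 ≤ (x.1.2.2 : ℝ) - x.1.1 := fun x =>
    sub_nonneg.2 ((hu x x.2).2.1.trans (by exact_mod_cast (hu x x.2).2.2.1)).le
  rw [← ENNReal.ofReal_sum_of_nonneg fun x _ => hpos x,
    ENNReal.ofReal_lt_ofReal_iff'] at hF
  have hFdisj : (F : Set u).PairwiseDisjoint fun x => Icc (x.1.2.1 : ℝ) x.1.2.2 :=
    fun x _ y _ hxy => (hdisj x.2 y.2 (Subtype.coe_ne_coe.2 hxy)).mono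
      (Icc_subset_Icc (hu x x.2).2.1.le le_rfl) (Icc_subset_Icc (hu y y.2).2.1.le le_rfl)
  obtain ⟨n, v, hv, hv0, hvn, hsum⟩ := hasPartitionSqSumGE_sum Y F (fun x => x.1.2.1)
    (fun x => x.1.2.2) (fun x _ => by exact_mod_cast (hu x x.2).2.2.1.le) hFdisj hab.le
    (fun x _ => ⟨(hu x x.2).1.trans (hu x x.2).2.1.le, (hu x x.2).2.2.2.1⟩)
  refine ⟨n, v, hv, hv0, hvn, ?_⟩
  calc M < K * ((b - a) / 2) := by
        rw [div_lt_iff₀ (sub_pos.2 hab)] at hK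
        linarith
    _ ≤ K * ∑ x ∈ F, ((x.1.2.2 : ℝ) - x.1.1) := by gcongr; exact hF.1.le
    _ = ∑ x ∈ F, K * ((x.1.2.2 : ℝ) - x.1.1) := Finset.mul_sum ..
    _ ≤ ∑ x ∈ F, (Y x.1.2.2 - Y x.1.2.1) ^ 2 :=
        Finset.sum_le_sum fun x _ => (hu x x.2).2.2.2.2.le
    _ ≤ _ := hsum

theorem exists_mem_dense_sq_gt {Y : ℝ → ℝ} (hY : ∀ t, ContinuousWithinAt Y (Ici t) t)
    (hlim : ∀ M : ℝ, ∀ ε > (0 : ℝ), ∃ t : ℝ, 0 < t ∧ t < ε ∧ M < Y t ^ 2 / t) {D : Set ℝ}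
    (hD : Dense D) (K : ℝ) {ε : ℝ} (hε : 0 < ε) :
    ∃ h ∈ D, 0 < h ∧ h < ε ∧ K * h < Y h ^ 2 := by
  obtain ⟨t, ht, htε, hKt⟩ := hlim K ε hε
  rw [lt_div_iff₀ ht] at hKt
  have hnhds : {h | K * h < Y h ^ 2} ∈ 𝓝[≥] t :=
    ((continuousWithinAt_const.mul continuousWithinAt_id).eventually_lt
      ((hY t).pow 2) hKt)
  obtain ⟨η, hη, hsub⟩ := mem_nhdsGE_iff_exists_Ico_subset.1 hnhds
  obtain ⟨h, hD, hth, hhη⟩ := hD.exists_between (lt_min hη htε)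
  exact ⟨h, hD, ht.trans hth, hhη.trans_le (min_le_right _ _),
    hsub ⟨hth.le, hhη.trans_le (min_le_left _ _)⟩⟩

theorem sqIncrUnboundedAt_of_forall_exists_rat {Y : ℝ → ℝ} {s : ℝ}
    (hY : ContinuousWithinAt Y (Ici s) s)
    (h : ∀ K n : ℕ, ∃ q : ℚ, s < q ∧ (q : ℝ) < s + 1 / (n + 1) ∧
      K * (q - s) < (Y q - Y s) ^ 2) :
    SqIncrUnboundedAt Y s := by
  intro K n
  obtain ⟨q, hsq, hq, hK⟩ := h K n
  have hnhds : {u | K * ((q : ℝ) - s) < (Y q - Y u) ^ 2} ∈ 𝓝[≥] s :=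
    (continuousWithinAt_const.sub hY).pow 2 |>.eventually (eventually_gt_nhds hK)
  obtain ⟨η, hη, hsub⟩ := mem_nhdsGE_iff_exists_Ico_subset.1 hnhds
  obtain ⟨p, hsp, hp⟩ := exists_rat_btwn (lt_min hη hsq)
  exact ⟨p, q, hsp, by exact_mod_cast hp.trans_le (min_le_right _ _), hq,
    hsub ⟨hsp.le, hp.trans_le (min_le_left _ _)⟩⟩

theorem measurableSet_sqIncrUnboundedAt {Ω : Type*} [MeasurableSpace Ω] {X : ℝ → Ω → ℝ}
    (hmeas : ∀ t, Measurable (X t)) :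
    MeasurableSet {p : Ω × ℝ | SqIncrUnboundedAt (fun t => X t p.1) p.2} := by
  simp only [SqIncrUnboundedAt, ofPred_forall, ofPred_exists, ofPred_and]
  refine .iInter fun K => .iInter fun n => .iUnion fun p => .iUnion fun q => ?_
  exact (measurableSet_lt (by fun_prop) (by fun_prop)).inter <| (MeasurableSet.const _).inter <|
    (measurableSet_lt (by fun_prop) (by fun_prop)).inter
      (measurableSet_lt (by fun_prop) (by fun_prop))

theorem Finset.exists_monotone_nat_covering (T : Finset ℝ) (hT : ∀ x ∈ T, 0 ≤ x) :
    ∃ (m : ℕ) (t : ℕ → ℝ), Monotone t ∧ t 0 = 0 ∧ ∀ x ∈ T, ∃ k : Fin m, t k = x := by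
  classical
  induction T using Finset.induction_on_max with
  | empty => exact ⟨1, 0, monotone_const, rfl, by simp⟩
  | insert a T hlt ih =>
    obtain ⟨m, t, ht, ht0, hcov⟩ := ih fun x hx => hT x (Finset.mem_insert_of_mem hx)
    have ha : 0 ≤ a := hT a (Finset.mem_insert_self a T)
    refine ⟨m + 2, fun k => if k ≤ m then min (t k) a else a, fun i j hij => ?_, by simp [ht0, ha],
      ?_⟩
    · by_cases hj : j ≤ m
      · simpa [hij.trans hj, hj] using min_le_min_right a (ht hij)
      · by_cases hi : i ≤ m <;> simp [hi, hj]
    · intro x hx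
      rcases Finset.mem_insert.1 hx with rfl | hx
      · exact ⟨⟨m + 1, by omega⟩, by simp⟩
      · obtain ⟨k, hk⟩ := hcov x hx
        exact ⟨⟨k, by omega⟩, by simp [k.2.le, hk, (hlt x hx).le]⟩

structure HasStationaryIndepIncrements {Ω : Type*} [MeasurableSpace Ω] (X : ℝ → Ω → ℝ)
    (μ : Measure Ω) : Prop where
  indep : ∀ (n : ℕ) (t : ℕ → ℝ), Monotone t →
    iIndepFun (fun i : Fin n => fun ω => X (t (i.val + 1)) ω - X (t i.val) ω) μ
  map_sub : ∀ s t : ℝ, 0 ≤ s → s ≤ t →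
    μ.map (fun ω => X t ω - X s ω) = μ.map (fun ω => X (t - s) ω)

namespace HasStationaryIndepIncrements

variable {Ω : Type*} [MeasurableSpace Ω] {μ : Measure Ω} [IsProbabilityMeasure μ]
  {X : ℝ → Ω → ℝ}

theorem map_increments_eq (hX : HasStationaryIndepIncrements X μ)
    (hmeas : ∀ t, Measurable (X t)) {t t' : ℕ → ℝ} (ht : Monotone t) (ht' : Monotone t')
    (h0 : 0 ≤ t 0) (h0' : 0 ≤ t' 0) (hgap : ∀ i, t (i + 1) - t i = t' (i + 1) - t' i) (n : ℕ) :
    μ.map (fun ω (i : Fin n) => X (t (i + 1)) ω - X (t i) ω)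
      = μ.map (fun ω (i : Fin n) => X (t' (i + 1)) ω - X (t' i) ω) := by
  have hlaw : ∀ u : ℕ → ℝ, Monotone u → 0 ≤ u 0 →
      μ.map (fun ω (i : Fin n) => X (u (i + 1)) ω - X (u i) ω)
        = Measure.pi fun i : Fin n => μ.map (X (u (i + 1) - u i)) := by
    intro u hu hu0
    refine ((iIndepFun_iff_map_fun_eq_pi_map (f := fun (i : Fin n) ω => X (u (i + 1)) ω - X (u i) ω)
      fun i => by fun_prop).1 (hX.indep n u hu)).trans ?_
    congr with i : 1
    exact hX.map_sub _ _ (hu0.trans (hu (Nat.zero_le _))) (hu (Nat.le_succ _))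
  rw [hlaw t ht h0, hlaw t' ht' h0']
  simp_rw [hgap]

theorem map_sub_initial_eq (hX : HasStationaryIndepIncrements X μ)
    (hmeas : ∀ t, Measurable (X t)) {t t' : ℕ → ℝ} (ht : Monotone t) (ht' : Monotone t')
    (h0 : 0 ≤ t 0) (h0' : 0 ≤ t' 0) (hgap : ∀ i, t (i + 1) - t i = t' (i + 1) - t' i) (n : ℕ) :
    μ.map (fun ω (i : Fin n) => X (t i) ω - X (t 0) ω)
      = μ.map (fun ω (i : Fin n) => X (t' i) ω - X (t' 0) ω) := by
  let partialSums : (Fin n → ℝ) → Fin n → ℝ := fun v i =>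
    ∑ j ∈ Finset.range i, if h : j < n then v ⟨j, h⟩ else 0
  have hps : Measurable partialSums :=
    measurable_pi_lambda _ fun i => Finset.measurable_sum _ fun j _ => by split_ifs <;> fun_prop
  have htelescope : ∀ u : ℕ → ℝ, (fun ω (i : Fin n) => X (u i) ω - X (u 0) ω)
      = partialSums ∘ fun ω (i : Fin n) => X (u (i + 1)) ω - X (u i) ω := by
    intro u
    ext ω i
    rw [Function.comp_apply, ← Finset.sum_range_sub fun j => X (u j) ω]
    refine Finset.sum_congr rfl fun j hj => ?_
    rw [dif_pos ((Finset.mem_range.1 hj).trans i.2)]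
  have hincr : ∀ u : ℕ → ℝ, Measurable fun ω (i : Fin n) => X (u (i + 1)) ω - X (u i) ω :=
    fun u => by fun_prop
  rw [htelescope, htelescope, ← Measure.map_map hps (hincr t), ← Measure.map_map hps (hincr t'),
    hX.map_increments_eq hmeas ht ht' h0 h0' hgap]

theorem map_shift_eq (hX : HasStationaryIndepIncrements X μ) (hmeas : ∀ t, Measurable (X t))
    (hX0 : ∀ᵐ ω ∂μ, X 0 ω = 0) {ι : Type*} (τ : ι → ℝ) (hτ : ∀ i, 0 ≤ τ i) {s : ℝ}
    (hs : 0 ≤ s) :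
    μ.map (fun ω i => X (s + τ i) ω - X s ω) = μ.map (fun ω i => X (τ i) ω) := by
  classical
  refine IsProjectiveLimit.unique (P := fun J => (μ.map fun ω i => X (τ i) ω).map J.restrict)
    (fun J => ?_) fun J => rfl
  obtain ⟨m, t, ht, ht0, hcov⟩ := (J.image τ).exists_monotone_nat_covering
    (by simpa using fun i _ => hτ i)
  choose c hc using fun j : J => hcov (τ j) (Finset.mem_image_of_mem τ j.2)
  let select : (Fin m → ℝ) → J → ℝ := fun v j => v (c j)
  have hselect : Measurable select := by fun_prop
  have hmono : Monotone fun k => s + t k := fun i j hij => add_le_add_right (ht hij) s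
  have key := hX.map_sub_initial_eq hmeas hmono ht (by simp [ht0, hs]) ht0.ge
    (fun i => by simp) m
  have hmeasV : ∀ u : ℕ → ℝ, Measurable fun ω (i : Fin m) => X (u i) ω - X (u 0) ω :=
    fun u => by fun_prop
  dsimp only
  rw [Measure.map_map (Finset.measurable_restrict _) (by fun_prop),
    Measure.map_map (Finset.measurable_restrict _) (by fun_prop)]
  calc μ.map (J.restrict ∘ fun ω i => X (s + τ i) ω - X s ω)
      = μ.map (select ∘ fun ω (i : Fin m) => X (s + t i) ω - X (s + t 0) ω) := by
        congr with ω j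
        simp [select, hc, ht0]
    _ = μ.map (select ∘ fun ω (i : Fin m) => X (t i) ω - X (t 0) ω) := by
        rw [← Measure.map_map hselect (hmeasV fun k => s + t k),
          ← Measure.map_map hselect (hmeasV t), key]
    _ = μ.map (J.restrict ∘ fun ω i => X (τ i) ω) := by
        refine Measure.map_congr ?_
        filter_upwards [hX0] with ω hω
        ext j
        simp [select, hc, ht0, hω]

theorem ae_sqIncrUnboundedAt (hX : HasStationaryIndepIncrements X μ)
    (hmeas : ∀ t, Measurable (X t)) (hX0 : ∀ᵐ ω ∂μ, X 0 ω = 0)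
    (hrc : ∀ᵐ ω ∂μ, ∀ t, ContinuousWithinAt (fun u => X u ω) (Ici t) t)
    (hlim : ∀ᵐ ω ∂μ, ∀ M : ℝ, ∀ ε > (0 : ℝ), ∃ t : ℝ, 0 < t ∧ t < ε ∧ M < X t ω ^ 2 / t)
    {s : ℝ} (hs : 0 ≤ s) :
    ∀ᵐ ω ∂μ, SqIncrUnboundedAt (fun t => X t ω) s := by
  -- only the times `q > s` matter; `max · 0` keeps the remaining ones admissible
  let τ : ℚ → ℝ := fun q => max (q - s) 0
  let G : Set (ℚ → ℝ) := {z | ∀ K n : ℕ, ∃ q : ℚ, s < q ∧ (q : ℝ) < s + 1 / (n + 1) ∧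
    K * (q - s) < z q ^ 2}
  have hG : MeasurableSet G := by
    simp only [G, ofPred_forall, ofPred_exists, ofPred_and]
    exact .iInter fun K => .iInter fun n => .iUnion fun q =>
      (MeasurableSet.const _).inter ((MeasurableSet.const _).inter
        (measurableSet_lt (by fun_prop) (by fun_prop)))
  have hdense : Dense (range fun q : ℚ => (q : ℝ) - s) :=
    (Homeomorph.subRight s).surjective.denseRange.comp Rat.denseRange_cast
      (Homeomorph.subRight s).continuous
  have hbase : ∀ᵐ ω ∂μ, (fun q => X (τ q) ω) ∈ G := by
    filter_upwards [hrc, hlim] with ω hrcω hlimω K n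
    obtain ⟨_, ⟨q, rfl⟩, hpos, hlt, hK⟩ :=
      exists_mem_dense_sq_gt hrcω hlimω hdense K (ε := 1 / (n + 1)) (by positivity)
    exact ⟨q, by linarith, by linarith, by simpa [τ, hpos.le] using hK⟩
  have hshift : ∀ᵐ ω ∂μ, (fun q => X (s + τ q) ω - X s ω) ∈ G := by
    have h0 : ∀ᵐ z ∂(μ.map fun ω q => X (τ q) ω), z ∈ G :=
      (ae_map_iff (by fun_prop) hG).2 hbase
    rw [← hX.map_shift_eq hmeas hX0 τ (fun _ => le_max_right _ _) hs] at h0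
    exact (ae_map_iff (by fun_prop) hG).1 h0
  filter_upwards [hshift, hrc] with ω hω hrcω
  refine sqIncrUnboundedAt_of_forall_exists_rat (hrcω s) fun K n => ?_
  obtain ⟨q, hsq, hq, hK⟩ := hω K n
  exact ⟨q, hsq, hq, by simpa [τ, hsq.le] using hK⟩

theorem ae_ae_sqIncrUnboundedAt (hX : HasStationaryIndepIncrements X μ)
    (hmeas : ∀ t, Measurable (X t)) (hX0 : ∀ᵐ ω ∂μ, X 0 ω = 0)
    (hrc : ∀ᵐ ω ∂μ, ∀ t, ContinuousWithinAt (fun u => X u ω) (Ici t) t)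
    (hlim : ∀ᵐ ω ∂μ, ∀ M : ℝ, ∀ ε > (0 : ℝ), ∃ t : ℝ, 0 < t ∧ t < ε ∧ M < X t ω ^ 2 / t) :
    ∀ᵐ ω ∂μ, ∀ᵐ s ∂(volume.restrict (Ici 0)), SqIncrUnboundedAt (fun t => X t ω) s :=
  (Measure.ae_ae_comm (measurableSet_sqIncrUnboundedAt hmeas)).2 <|
    (ae_restrict_iff' measurableSet_Ici).2 <| .of_forall fun _ hs =>
      hX.ae_sqIncrUnboundedAt hmeas hX0 hrc hlim hs

end HasStationaryIndepIncrements

/-- Let `X` be a real-valued process with càdlàg paths, stationary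
independent increments and `X₀ = 0`, such that almost surely
`limsup_{t→0} t⁻¹ X_t² = ∞`.  Then almost surely `X` has infinite `2`-variation on
`[0,1]`: the partition sums of squared increments are unbounded. -/
theorem infinite_two_variation {Ω : Type*} [MeasurableSpace Ω]
    (μ : Measure Ω) [IsProbabilityMeasure μ]
    (X : ℝ → Ω → ℝ) (hXmeas : ∀ t, Measurable (X t))
    (hX0 : ∀ᵐ ω ∂μ, X 0 ω = 0)
    (hrc : ∀ᵐ ω ∂μ, ∀ t, ContinuousWithinAt (fun u => X u ω) (Ici t) t)
    (hindep : ∀ (n : ℕ) (t : ℕ → ℝ), Monotone t →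
      iIndepFun
        (fun i : Fin n => fun ω => X (t (i.val + 1)) ω - X (t i.val) ω) μ)
    (hstat : ∀ s t : ℝ, 0 ≤ s → s ≤ t →
      Measure.map (fun ω => X t ω - X s ω) μ = Measure.map (fun ω => X (t - s) ω) μ)
    (hlimsup : ∀ᵐ ω ∂μ, ∀ M : ℝ, ∀ ε > (0 : ℝ), ∃ t : ℝ, 0 < t ∧ t < ε ∧
      M < (X t ω) ^ 2 / t) :
    ∀ᵐ ω ∂μ, ∀ M : ℝ, ∃ (n : ℕ) (u : ℕ → ℝ), Monotone u ∧ u 0 = 0 ∧ u n = 1 ∧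
      M < ∑ i ∈ Finset.range n, (X (u (i + 1)) ω - X (u i) ω) ^ 2 := by
  have hX : HasStationaryIndepIncrements X μ := ⟨hindep, hstat⟩
  filter_upwards [hX.ae_ae_sqIncrUnboundedAt hXmeas hX0 hrc hlimsup] with ω hω
  exact exists_partitionSqSum_gt_of_ae_sqIncrUnboundedAt zero_lt_one
    (ae_restrict_of_ae_restrict_of_subset Ico_subset_Ici_self hω)
end

section
/- Let $\mathbf X$ be a real-valued L\'evy process on $[0,1]$ with $\mathbf X_0 = 0$, and let $q > 0$ and $f(x) = 1 - \exp(-|x|^q)$. If $\lim_{t \to 0} t^{-1} \mathbb E[f(\mathbf X_t)] = \infty$, then almost surely $\sup_{\mathcal D \subset [0,1]} \sum_{t_k \in \mathcal D} |\mathbf X_{t_{k+1}} - \mathbf X_{t_k}|^q = \infty$. -/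
/-!
Write `T n = ∑_{k < n} |X_{(k+1)/n} - X_{k/n}|^q` for the `q`-variation sum of `X` along the
uniform partition of mesh `1/n`. The increments are i.i.d. copies of `X_{1/n}`, so
`𝔼[exp (-T n)] = (1 - 𝔼[f (X_{1/n})])^n ≤ exp (-n 𝔼[f (X_{1/n})])`, which tends to `0` by the
blow-up hypothesis. By Markov's inequality `μ {T n ≤ m for all n} ≤ exp m · 𝔼[exp (-T n)] → 0`
for every `m`, so almost surely the sums `T n` are unbounded.
-/

open MeasureTheory ProbabilityTheory Set Filter Topology Finset

noncomputable def uniformPartition (n : ℕ) (i : ℕ) : ℝ := (i : ℝ) / n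

lemma monotone_uniformPartition (n : ℕ) : Monotone (uniformPartition n) :=
  fun _ _ hij => div_le_div_of_nonneg_right (by exact_mod_cast hij) n.cast_nonneg

lemma uniformPartition_succ_sub (n i : ℕ) :
    uniformPartition n (i + 1) - uniformPartition n i = 1 / n := by
  simp only [uniformPartition]
  push_cast
  ring

noncomputable def variationSum {Ω : Type*} (X : ℝ → Ω → ℝ) (q : ℝ) (u : ℕ → ℝ) (n : ℕ)
    (ω : Ω) : ℝ :=
  ∑ i ∈ range n, |X (u (i + 1)) ω - X (u i) ω| ^ q

lemma variationSum_nonneg {Ω : Type*} (X : ℝ → Ω → ℝ) (q : ℝ) (u : ℕ → ℝ) (n : ℕ)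
    (ω : Ω) : 0 ≤ variationSum X q u n ω :=
  sum_nonneg fun _ _ => Real.rpow_nonneg (abs_nonneg _) q

lemma tendsto_one_sub_pow_of_tendsto_mul_atTop {a : ℕ → ℝ} (ha : ∀ n, a n ≤ 1)
    (h : Tendsto (fun n : ℕ => n * a n) atTop atTop) :
    Tendsto (fun n => (1 - a n) ^ n) atTop (𝓝 0) := by
  refine squeeze_zero (fun n => pow_nonneg (sub_nonneg.2 (ha n)) n) (fun n => ?_)
    (Real.tendsto_exp_atBot.comp (tendsto_neg_atTop_atBot.comp h))
  calc (1 - a n) ^ n ≤ Real.exp (-a n) ^ n :=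
        pow_le_pow_left₀ (sub_nonneg.2 (ha n)) (Real.one_sub_le_exp_neg _) n
    _ = Real.exp (-(n * a n)) := by rw [← Real.exp_nat_mul, mul_neg]

lemma tendsto_natCast_mul_one_div_atTop {f : ℝ → ℝ}
    (hf : Tendsto (fun t => f t / t) (𝓝[>] 0) atTop) :
    Tendsto (fun n : ℕ => n * f (1 / n)) atTop atTop := by
  have hinv : Tendsto (fun n : ℕ => 1 / (n : ℝ)) atTop (𝓝[>] 0) := by
    simpa only [one_div, Function.comp_def] using
      tendsto_inv_atTop_nhdsGT_zero.comp (tendsto_natCast_atTop_atTop (R := ℝ))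
  refine (hf.comp hinv).congr fun n => ?_
  rw [Function.comp_apply, div_div_eq_mul_div, div_one, mul_comm]

section

variable {Ω : Type*} [MeasurableSpace Ω] {μ : Measure Ω}

lemma integral_exp_neg_eq_one_sub [IsProbabilityMeasure μ] {Y : Ω → ℝ} (hY : Measurable Y)
    (hY0 : ∀ ω, 0 ≤ Y ω) :
    ∫ ω, Real.exp (-Y ω) ∂μ = 1 - ∫ ω, (1 - Real.exp (-Y ω)) ∂μ := by
  have hint : Integrable (fun ω => Real.exp (-Y ω)) μ :=
    Integrable.of_bound (by fun_prop) 1 (ae_of_all _ fun ω => by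
      simpa [abs_of_pos (Real.exp_pos _)] using hY0 ω)
  rw [integral_sub (integrable_const 1) hint]
  simp

lemma ae_forall_exists_lt_of_tendsto_integral_exp_neg [IsFiniteMeasure μ] {T : ℕ → Ω → ℝ}
    (hTm : ∀ n, Measurable (T n))
    (hT0 : ∀ n ω, 0 ≤ T n ω)
    (hlim : Tendsto (fun n => ∫ ω, Real.exp (-T n ω) ∂μ) atTop (𝓝 0)) :
    ∀ᵐ ω ∂μ, ∀ M : ℝ, ∃ n, M < T n ω := by
  suffices h : ∀ m : ℕ, μ {ω | ∀ n, T n ω ≤ m} = 0 by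
    filter_upwards [ae_all_iff.2 fun m => measure_eq_zero_iff_ae_notMem.1 (h m)] with ω hω M
    obtain ⟨n, hn⟩ := not_forall.1 (hω ⌈M⌉₊)
    exact ⟨n, (Nat.le_ceil M).trans_lt (not_le.1 hn)⟩
  intro m
  set A := {ω | ∀ n, T n ω ≤ m}
  have hmarkov : ∀ n, Real.exp (-m) * μ.real A ≤ ∫ ω, Real.exp (-T n ω) ∂μ := fun n =>
    calc Real.exp (-m) * μ.real A
        ≤ Real.exp (-m) * μ.real {ω | Real.exp (-m) ≤ Real.exp (-T n ω)} := by
          gcongr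
          · finiteness
          · exact fun ω hω => Real.exp_le_exp.2 (neg_le_neg (hω n))
      _ ≤ ∫ ω, Real.exp (-T n ω) ∂μ :=
          mul_meas_ge_le_integral_of_nonneg (ae_of_all _ fun ω => (Real.exp_pos _).le)
            (Integrable.of_bound (by fun_prop) 1 (ae_of_all _ fun ω => by
              simpa [abs_of_pos (Real.exp_pos _)] using hT0 n ω)) _
  have hA : Real.exp (-m) * μ.real A ≤ 0 := ge_of_tendsto' hlim hmarkov
  rw [← measureReal_eq_zero_iff]
  exact le_antisymm (nonpos_of_mul_nonpos_right hA (Real.exp_pos _)) measureReal_nonneg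

variable {X : ℝ → Ω → ℝ}

lemma measurable_variationSum (hXmeas : ∀ t, Measurable (X t)) (q : ℝ) (u : ℕ → ℝ) (n : ℕ) :
    Measurable (variationSum X q u n) := by
  unfold variationSum
  fun_prop

lemma integral_comp_increment_eq {s t : ℝ}
    (hmap : μ.map (fun ω => X t ω - X s ω) = μ.map (X (t - s)))
    (hXmeas : ∀ t, Measurable (X t)) {g : ℝ → ℝ} (hg : Measurable g) :
    ∫ ω, g (X t ω - X s ω) ∂μ = ∫ ω, g (X (t - s) ω) ∂μ := by
  rw [← integral_map (φ := fun ω => X t ω - X s ω) (by fun_prop) hg.aestronglyMeasurable, hmap,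
    integral_map (hXmeas _).aemeasurable hg.aestronglyMeasurable]

lemma integral_prod_comp_increments (hXmeas : ∀ t, Measurable (X t))
    (hstat : ∀ s t : ℝ, 0 ≤ s → s ≤ t →
      μ.map (fun ω => X t ω - X s ω) = μ.map (fun ω => X (t - s) ω))
    {n : ℕ} {u : ℕ → ℝ} (hu0 : 0 ≤ u 0) (hu : Monotone u)
    (hindep : iIndepFun (fun i : Fin n => fun ω => X (u (i.val + 1)) ω - X (u i.val) ω) μ)
    {g : ℝ → ℝ} (hg : Measurable g) :
    ∫ ω, ∏ i ∈ range n, g (X (u (i + 1)) ω - X (u i) ω) ∂μ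
      = ∏ i ∈ range n, ∫ ω, g (X (u (i + 1) - u i) ω) ∂μ := by
  simp_rw [← Fin.prod_univ_eq_prod_range]
  rw [hindep.integral_fun_prod_comp (f := fun _ => g)
    (fun i => ((hXmeas _).sub (hXmeas _)).aemeasurable) (fun _ => hg.aestronglyMeasurable)]
  refine Finset.prod_congr rfl fun i _ => integral_comp_increment_eq ?_ hXmeas hg
  exact hstat _ _ (hu0.trans (hu (Nat.zero_le _))) (hu (Nat.le_succ _))

lemma integral_exp_neg_variationSum_uniformPartition (hXmeas : ∀ t, Measurable (X t))
    (hstat : ∀ s t : ℝ, 0 ≤ s → s ≤ t →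
      μ.map (fun ω => X t ω - X s ω) = μ.map (fun ω => X (t - s) ω))
    (q : ℝ) (n : ℕ)
    (hindep : iIndepFun (fun i : Fin n => fun ω =>
      X (uniformPartition n (i.val + 1)) ω - X (uniformPartition n i.val) ω) μ) :
    ∫ ω, Real.exp (-variationSum X q (uniformPartition n) n ω) ∂μ
      = (∫ ω, Real.exp (-|X (1 / n) ω| ^ q) ∂μ) ^ n := by
  simp_rw [variationSum, ← sum_neg_distrib, Real.exp_sum]
  rw [integral_prod_comp_increments hXmeas hstat (by simp [uniformPartition])
    (monotone_uniformPartition n) hindep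
    (by fun_prop : Measurable fun x : ℝ => Real.exp (-|x| ^ q))]
  simp_rw [uniformPartition_succ_sub, prod_const, card_range]

end

theorem infinite_q_variation_of_generator_blowup_general {Ω : Type*} [MeasurableSpace Ω]
    (μ : Measure Ω) [IsProbabilityMeasure μ]
    (X : ℝ → Ω → ℝ) (hXmeas : ∀ t, Measurable (X t))
    (hindep : ∀ (n : ℕ) (t : ℕ → ℝ), Monotone t →
      iIndepFun
        (fun i : Fin n => fun ω => X (t (i.val + 1)) ω - X (t i.val) ω) μ)
    (hstat : ∀ s t : ℝ, 0 ≤ s → s ≤ t →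
      Measure.map (fun ω => X t ω - X s ω) μ = Measure.map (fun ω => X (t - s) ω) μ)
    (q : ℝ)
    (hblow : Tendsto
      (fun t : ℝ => (∫ ω, (1 - Real.exp (-(|X t ω| ^ q))) ∂μ) / t)
      (𝓝[>] (0 : ℝ)) atTop) :
    ∀ᵐ ω ∂μ, ∀ M : ℝ, ∃ (n : ℕ) (u : ℕ → ℝ), Monotone u ∧ u 0 = 0 ∧ u n = 1 ∧
      M < ∑ i ∈ Finset.range n, |X (u (i + 1)) ω - X (u i) ω| ^ q := by
  set a : ℕ → ℝ := fun n => ∫ ω, (1 - Real.exp (-(|X (1 / n) ω| ^ q))) ∂μ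
  have hexp : ∀ n : ℕ, ∫ ω, Real.exp (-|X (1 / n) ω| ^ q) ∂μ = 1 - a n := fun n =>
    integral_exp_neg_eq_one_sub (by fun_prop) fun ω => by positivity
  have hvar : Tendsto (fun n => ∫ ω, Real.exp (-variationSum X q (uniformPartition n) n ω) ∂μ)
      atTop (𝓝 0) := by
    simp_rw [integral_exp_neg_variationSum_uniformPartition hXmeas hstat q _
      (hindep _ _ (monotone_uniformPartition _)), hexp]
    refine tendsto_one_sub_pow_of_tendsto_mul_atTop (fun n => ?_)
      (tendsto_natCast_mul_one_div_atTop hblow)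
    exact sub_nonneg.1 (hexp n ▸ integral_nonneg fun ω => (Real.exp_pos _).le)
  filter_upwards [ae_forall_exists_lt_of_tendsto_integral_exp_neg
    (fun n => measurable_variationSum hXmeas q _ n) (fun n => variationSum_nonneg X q _ n) hvar]
    with ω hω M
  obtain ⟨n, hn⟩ := hω (max M 0)
  have hn0 : n ≠ 0 := by
    rintro rfl
    simp [variationSum] at hn
  exact ⟨n, uniformPartition n, monotone_uniformPartition n, by simp [uniformPartition],
    div_self (Nat.cast_ne_zero.2 hn0), (le_max_left M 0).trans_lt hn⟩

/-- Let `X` be a real-valued Lévy process on `[0,1]` with `X₀ = 0`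
(càdlàg, stationary independent increments), `q > 0` and `f(x) = 1 - exp(-|x|^q)`.
If `t⁻¹ 𝔼[f(X_t)] → ∞` as `t → 0⁺`, then almost surely
`sup_𝒟 ∑ |X_{t_{k+1}} - X_{t_k}|^q = ∞`. -/
theorem infinite_q_variation_of_generator_blowup {Ω : Type*} [MeasurableSpace Ω]
    (μ : Measure Ω) [IsProbabilityMeasure μ]
    (X : ℝ → Ω → ℝ) (hXmeas : ∀ t, Measurable (X t))
    (hX0 : ∀ᵐ ω ∂μ, X 0 ω = 0)
    (hrc : ∀ᵐ ω ∂μ, ∀ t, ContinuousWithinAt (fun u => X u ω) (Ici t) t)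
    (hindep : ∀ (n : ℕ) (t : ℕ → ℝ), Monotone t →
      iIndepFun
        (fun i : Fin n => fun ω => X (t (i.val + 1)) ω - X (t i.val) ω) μ)
    (hstat : ∀ s t : ℝ, 0 ≤ s → s ≤ t →
      Measure.map (fun ω => X t ω - X s ω) μ = Measure.map (fun ω => X (t - s) ω) μ)
    (q : ℝ) (hq : 0 < q)
    (hblow : Tendsto
      (fun t : ℝ => (∫ ω, (1 - Real.exp (-(|X t ω| ^ q))) ∂μ) / t)
      (𝓝[>] (0 : ℝ)) atTop) :
    ∀ᵐ ω ∂μ, ∀ M : ℝ, ∃ (n : ℕ) (u : ℕ → ℝ), Monotone u ∧ u 0 = 0 ∧ u n = 1 ∧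
      M < ∑ i ∈ Finset.range n, |X (u (i + 1)) ω - X (u i) ω| ^ q :=
  infinite_q_variation_of_generator_blowup_general μ X hXmeas hindep hstat q hblow
end

section
/- Let $G$ be a Lie group, $\Pi$ a L\'evy measure on $G$, and $X_{n1}$, $n \geq 1$, an infinitesimal family of $G$-valued random variables such that $\lim_{n\to\infty} n\,\mathbb E[f(X_{n1})] = \Pi(f)$ for every bounded continuous $f : G \to \mathbb R$ vanishing on a neighbourhood of the identity. Let $\theta : G \to [0,\infty)$ be a continuous bounded function with $\theta(1_G) = 0$ such that $\sup_{n\geq 1} n\,\mathbb E[\theta(X_{n1})] < \infty$. Then $\int_G \theta(x) \Pi(dx) \leq \limsup_{n\to\infty} n\,\mathbb E[\theta(X_{n1})] < \infty$. -/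
open MeasureTheory Filter Topology
open scoped ENNReal

/-!
The truncations `(θ - 1/(k+1))⁺` are continuous, bounded and vanish on the neighbourhood
`{θ < 1/(k+1)}` of `e`, so the hypothesis computes their `Pim`-integrals as limits of
`n 𝔼[(θ - 1/(k+1))⁺ (X n)] ≤ n 𝔼[θ (X n)]`. They increase to `θ`, and monotone convergence
bounds `∫ θ dPim` by the limsup.
-/

theorem monotone_sub_one_div_nat_add_one (a : ℝ) :
    Monotone fun k : ℕ => a - 1 / ((k : ℝ) + 1) :=
  fun _ _ hkl => sub_le_sub_left (Nat.one_div_le_one_div hkl) a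

namespace ENNReal

theorem ofReal_eq_iSup_ofReal_sub_one_div (a : ℝ) :
    ENNReal.ofReal a = ⨆ k : ℕ, ENNReal.ofReal (a - 1 / ((k : ℝ) + 1)) := by
  refine (iSup_eq_of_tendsto (fun _ _ hkl => ENNReal.ofReal_le_ofReal
    (monotone_sub_one_div_nat_add_one a hkl)) ?_).symm
  have h : Tendsto (fun k : ℕ => a - 1 / ((k : ℝ) + 1)) atTop (𝓝 a) := by
    simpa using tendsto_const_nhds.sub (tendsto_one_div_add_atTop_nhds_zero_nat (𝕜 := ℝ))
  exact (ENNReal.continuous_ofReal.tendsto a).comp h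

theorem limsup_ofReal_lt_top {a : ℕ → ℝ} (ha : BddAbove (Set.range a)) :
    limsup (fun n => ENNReal.ofReal (a n)) atTop < ⊤ := by
  obtain ⟨C, hC⟩ := ha
  exact (limsup_le_of_le (h := Eventually.of_forall fun n =>
    ENNReal.ofReal_le_ofReal (hC ⟨n, rfl⟩))).trans_lt ENNReal.ofReal_lt_top

theorem ofReal_le_limsup_ofReal_of_tendsto {ι : Type*} {l : Filter ι} [l.NeBot]
    {a b : ι → ℝ} {x : ℝ} (ha : Tendsto a l (𝓝 x)) (hab : ∀ i, a i ≤ b i) :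
    ENNReal.ofReal x ≤ limsup (fun i => ENNReal.ofReal (b i)) l := by
  rw [← ((ENNReal.continuous_ofReal.tendsto x).comp ha).limsup_eq]
  exact limsup_le_limsup (Eventually.of_forall fun i => ENNReal.ofReal_le_ofReal (hab i))

end ENNReal

namespace MeasureTheory

theorem lintegral_ofReal_eq_iSup_sub_one_div {α : Type*} [MeasurableSpace α] (ν : Measure α)
    {f : α → ℝ} (hf : Measurable f) :
    ∫⁻ x, ENNReal.ofReal (f x) ∂ν = ⨆ k : ℕ, ∫⁻ x, ENNReal.ofReal (f x - 1 / ((k : ℝ) + 1)) ∂ν :=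
  calc ∫⁻ x, ENNReal.ofReal (f x) ∂ν
      = ∫⁻ x, ⨆ k : ℕ, ENNReal.ofReal (f x - 1 / ((k : ℝ) + 1)) ∂ν :=
        lintegral_congr fun x => ENNReal.ofReal_eq_iSup_ofReal_sub_one_div (f x)
    _ = _ := lintegral_iSup (fun _ => (hf.sub_const _).ennreal_ofReal)
        fun _ _ hkl _ => ENNReal.ofReal_le_ofReal (monotone_sub_one_div_nat_add_one _ hkl)

theorem integrable_of_bound_of_measure_compl_ne_top {α E : Type*} [MeasurableSpace α]
    [NormedAddCommGroup E] {ν : Measure α} {f : α → E} {U : Set α} (hU : ν Uᶜ ≠ ∞)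
    (hf : AEStronglyMeasurable f ν) {M : ℝ} (hM : ∀ x, ‖f x‖ ≤ M) (hfU : ∀ x ∈ U, f x = 0) :
    Integrable f ν :=
  (Measure.integrableOn_of_bounded hU hf (ae_of_all _ hM)).integrable_of_forall_notMem_eq_zero
    fun x hx => hfU x (not_not.1 hx)

end MeasureTheory

theorem exists_mem_nhds_forall_max_sub_eq_zero {G : Type*} [TopologicalSpace G] {θ : G → ℝ}
    {e : G} (hθ : ContinuousAt θ e) {ε : ℝ} (hε : θ e < ε) :
    ∃ U ∈ 𝓝 e, ∀ x ∈ U, max (θ x - ε) 0 = 0 :=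
  ⟨{x | θ x < ε}, hθ.preimage_mem_nhds (Iio_mem_nhds hε),
    fun _ hx => max_eq_right (sub_nonpos.2 (le_of_lt hx))⟩

theorem levy_measure_scaling_integral_bound_general {G Ω : Type*} [MetricSpace G]
    [MeasurableSpace G] [BorelSpace G] [MeasurableSpace Ω]
    (μ : Measure Ω) [IsProbabilityMeasure μ]
    (e : G) (Pim : Measure G)
    (hPfin : ∀ U ∈ 𝓝 e, Pim Uᶜ < ⊤)
    (X : ℕ → Ω → G) (hXmeas : ∀ n, Measurable (X n))
    (hconv : ∀ f : G → ℝ, Continuous f → (∃ M : ℝ, ∀ x, |f x| ≤ M) →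
      (∃ U ∈ 𝓝 e, ∀ x ∈ U, f x = 0) →
      Tendsto (fun n : ℕ => (n : ℝ) * ∫ ω, f (X n ω) ∂μ) atTop (𝓝 (∫ x, f x ∂Pim)))
    (θ : G → ℝ) (hθcont : Continuous θ) (hθbdd : ∃ M : ℝ, ∀ x, θ x ≤ M)
    (hθ0 : θ e = 0) (hθnonneg : ∀ x, 0 ≤ θ x)
    (hθscale : BddAbove (Set.range fun n : ℕ => (n : ℝ) * ∫ ω, θ (X n ω) ∂μ)) :
    ∫⁻ x, ENNReal.ofReal (θ x) ∂Pim ≤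
        limsup (fun n : ℕ => ENNReal.ofReal ((n : ℝ) * ∫ ω, θ (X n ω) ∂μ)) atTop ∧
      limsup (fun n : ℕ => ENNReal.ofReal ((n : ℝ) * ∫ ω, θ (X n ω) ∂μ)) atTop < ⊤ := by
  refine ⟨?_, ENNReal.limsup_ofReal_lt_top hθscale⟩
  obtain ⟨M, hM⟩ := hθbdd
  have hθX : ∀ n, Integrable (fun ω => θ (X n ω)) μ := fun n =>
    .of_bound (hθcont.measurable.comp (hXmeas n)).aestronglyMeasurable M
      (ae_of_all _ fun ω => (Real.norm_of_nonneg (hθnonneg _)).trans_le (hM _))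
  rw [lintegral_ofReal_eq_iSup_sub_one_div Pim hθcont.measurable]
  refine iSup_le fun k => ?_
  set g : G → ℝ := fun x => max (θ x - 1 / ((k : ℝ) + 1)) 0
  have hg_nonneg : ∀ x, 0 ≤ g x := fun x => le_max_right _ _
  have hg_le : ∀ x, g x ≤ θ x := fun x =>
    max_le (sub_le_self _ Nat.one_div_pos_of_nat.le) (hθnonneg x)
  have hg_abs : ∀ x, |g x| ≤ M := fun x => (abs_of_nonneg (hg_nonneg x)).trans_le
    ((hg_le x).trans (hM x))
  obtain ⟨U, hU, hgU⟩ := exists_mem_nhds_forall_max_sub_eq_zero hθcont.continuousAt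
    (hθ0.trans_lt Nat.one_div_pos_of_nat)
  have hg_int : Integrable g Pim := integrable_of_bound_of_measure_compl_ne_top (hPfin U hU).ne
    (by fun_prop) hg_abs hgU
  calc ∫⁻ x, ENNReal.ofReal (θ x - 1 / ((k : ℝ) + 1)) ∂Pim
        = ∫⁻ x, ENNReal.ofReal (g x) ∂Pim := by simp [g]
    _ = ENNReal.ofReal (∫ x, g x ∂Pim) :=
        (ofReal_integral_eq_lintegral_ofReal hg_int (ae_of_all _ hg_nonneg)).symm
    _ ≤ _ := ENNReal.ofReal_le_limsup_ofReal_of_tendsto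
        (hconv g (by fun_prop) ⟨M, hg_abs⟩ ⟨U, hU, hgU⟩) fun n =>
          mul_le_mul_of_nonneg_left (integral_mono_of_nonneg (ae_of_all _ fun _ => hg_nonneg _)
            (hθX n) (ae_of_all _ fun _ => hg_le _)) n.cast_nonneg

/-- Let `Pim` be a Lévy measure on a (metrizable) group `G` with identity
`e` (σ-finite, no mass at `e`, finite mass outside every neighbourhood of `e`), and let
`X n` be an infinitesimal family with `n 𝔼[f(X n)] → Pim(f)` for every bounded continuous
`f` vanishing near `e`.  If `θ` is a continuous bounded nonnegative function with
`θ(e) = 0` and `sup_n n 𝔼[θ(X n)] < ∞`, then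
`∫ θ dPim ≤ limsup_n n 𝔼[θ(X n)] < ∞`. -/
theorem levy_measure_scaling_integral_bound {G Ω : Type*} [MetricSpace G]
    [MeasurableSpace G] [BorelSpace G] [MeasurableSpace Ω]
    (μ : Measure Ω) [IsProbabilityMeasure μ]
    (e : G) (Pim : Measure G) [SigmaFinite Pim]
    (hPe : Pim {e} = 0)
    (hPfin : ∀ U ∈ 𝓝 e, Pim Uᶜ < ⊤)
    (X : ℕ → Ω → G) (hXmeas : ∀ n, Measurable (X n))
    (hinfin : ∀ U ∈ 𝓝 e, Tendsto (fun n => μ {ω | X n ω ∉ U}) atTop (𝓝 0))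
    (hconv : ∀ f : G → ℝ, Continuous f → (∃ M : ℝ, ∀ x, |f x| ≤ M) →
      (∃ U ∈ 𝓝 e, ∀ x ∈ U, f x = 0) →
      Tendsto (fun n : ℕ => (n : ℝ) * ∫ ω, f (X n ω) ∂μ) atTop (𝓝 (∫ x, f x ∂Pim)))
    (θ : G → ℝ) (hθcont : Continuous θ) (hθbdd : ∃ M : ℝ, ∀ x, θ x ≤ M)
    (hθ0 : θ e = 0) (hθnonneg : ∀ x, 0 ≤ θ x)
    (hθscale : BddAbove (Set.range fun n : ℕ => (n : ℝ) * ∫ ω, θ (X n ω) ∂μ)) :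
    ∫⁻ x, ENNReal.ofReal (θ x) ∂Pim ≤
        limsup (fun n : ℕ => ENNReal.ofReal ((n : ℝ) * ∫ ω, θ (X n ω) ∂μ)) atTop ∧
      limsup (fun n : ℕ => ENNReal.ofReal ((n : ℝ) * ∫ ω, θ (X n ω) ∂μ)) atTop < ⊤ :=
  levy_measure_scaling_integral_bound_general μ e Pim hPfin X hXmeas hconv θ hθcont hθbdd hθ0
    hθnonneg hθscale
end
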